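/- arXiv:2506.13669 — 4 statements merged into one kernel-verified Lean document; each statement's English description precedes it below -/
import Mathlib

section
/- Let n ∈ ℕ, s ∈ (0,1) and let A be a Young function. Then there exists a constant c = c(n,s) such that |u|_{𝓛^{φ_{s,A}}(ℝⁿ)} ≤ c |u|_{s,A,ℝⁿ} for every u ∈ V^{s,A}(ℝⁿ); in particular, V^{s,A}(ℝⁿ) is continuously embedded into the Campanato space 𝓛^{φ_{s,A}}(ℝⁿ). -/
open MeasureTheory Metric Set Filter
open scoped ENNReal Topology

noncomputable section

/-- Euclidean space `ℝⁿ`. -/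
abbrev Euc (n : ℕ) := EuclideanSpace ℝ (Fin n)

/-- A Young function: convex, left-continuous, vanishing at `0`,
non-constant on `(0,∞)`, with values in `[0,∞]`. -/
def IsYoung (A : ℝ → ℝ≥0∞) : Prop :=
  A 0 = 0 ∧
  (∀ x y t : ℝ, 0 ≤ x → 0 ≤ y → 0 ≤ t → t ≤ 1 →
      A (t * x + (1 - t) * y) ≤ ENNReal.ofReal t * A x + ENNReal.ofReal (1 - t) * A y) ∧
  (∀ t : ℝ, 0 < t → ContinuousWithinAt A (Set.Iic t) t) ∧
  (∃ t₁ t₂ : ℝ, 0 < t₁ ∧ 0 < t₂ ∧ A t₁ ≠ A t₂)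

/-- The right-continuous generalized inverse of a monotone function `A : [0,∞) → [0,∞]`. -/
def rcInv (A : ℝ → ℝ≥0∞) (v : ℝ≥0∞) : ℝ :=
  sInf {τ : ℝ | 0 ≤ τ ∧ v < A τ}

/-- The Young conjugate `Ã(t) = sup {τ t - A(τ) : τ ≥ 0}`. -/
def youngConj (A : ℝ → ℝ≥0∞) (t : ℝ) : ℝ≥0∞ :=
  ⨆ (τ : ℝ) (_ : 0 ≤ τ), ENNReal.ofReal (τ * t) - A τ

/-- The functional `J_{σ,A}(v)` for a vector-valued `v`, with the Euclidean norm. -/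
def Jfun (n : ℕ) (σ : ℝ) (A : ℝ → ℝ≥0∞) {ι : Type} [Fintype ι]
    (v : Euc n → ι → ℝ) : ℝ≥0∞ :=
  ∫⁻ x : Euc n, ∫⁻ y : Euc n,
    A (Real.sqrt (∑ i, (v x i - v y i) ^ 2) / ‖x - y‖ ^ σ) /
      ENNReal.ofReal (‖x - y‖ ^ (n : ℝ))

/-- The fractional Orlicz–Sobolev seminorm `|v|_{σ,A,ℝⁿ}` (vector-valued version). -/
def fracSem (n : ℕ) (σ : ℝ) (A : ℝ → ℝ≥0∞) {ι : Type} [Fintype ι]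
    (v : Euc n → ι → ℝ) : ℝ≥0∞ :=
  sInf (ENNReal.ofReal '' {lam : ℝ | 0 < lam ∧ Jfun n σ A (fun x i => v x i / lam) ≤ 1})

/-- The fractional Orlicz–Sobolev seminorm `|u|_{σ,A,ℝⁿ}` of a scalar function. -/
def fracSemS (n : ℕ) (σ : ℝ) (A : ℝ → ℝ≥0∞) (u : Euc n → ℝ) : ℝ≥0∞ :=
  fracSem n σ A (fun x (_ : Fin 1) => u x)

/-- The normalized mean oscillation `φ(|B|^{1/n})⁻¹ ⨍_B |u - u_B|` over the ball `B = B(x,r)`. -/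
def oscQuot (n : ℕ) (φ : ℝ → ℝ) (u : Euc n → ℝ) (x : Euc n) (r : ℝ) : ℝ :=
  (φ ((volume (ball x r)).toReal ^ ((n : ℝ)⁻¹)))⁻¹ *
    ⨍ y in ball x r, |u y - ⨍ z in ball x r, u z|

/-- The Campanato seminorm `|u|_{𝓛^φ(ℝⁿ)}`. -/
def campSem (n : ℕ) (φ : ℝ → ℝ) (u : Euc n → ℝ) : ℝ≥0∞ :=
  ⨆ (x : Euc n) (r : ℝ) (_ : 0 < r), ENNReal.ofReal (oscQuot n φ u x r)

/-- The Campanato quantity restricted to balls of measure at most `r`. -/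
def campSemSmall (n : ℕ) (φ : ℝ → ℝ) (u : Euc n → ℝ) (r : ℝ) : ℝ≥0∞ :=
  ⨆ (x : Euc n) (ρ : ℝ) (_ : 0 < ρ) (_ : volume (ball x ρ) ≤ ENNReal.ofReal r),
    ENNReal.ofReal (oscQuot n φ u x ρ)

/-- `φ : (0,∞) → (0,∞)` is admissible: positive and bounded below away from zero on `[a,∞)`. -/
def Admissible (φ : ℝ → ℝ) : Prop :=
  (∀ r : ℝ, 0 < r → 0 < φ r) ∧
  ∀ a : ℝ, 0 < a → ∃ ε : ℝ, 0 < ε ∧ ∀ r : ℝ, a ≤ r → ε ≤ φ r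

/-- `φ_{s,A}(r) = r^s A⁻¹(r^{-n})`. -/
def phiSA (n : ℕ) (s : ℝ) (A : ℝ → ℝ≥0∞) (r : ℝ) : ℝ :=
  r ^ s * rcInv A (ENNReal.ofReal (r ^ (-(n : ℝ))))

/-- `u` is `m`-times weakly differentiable, with iterated weak partial
derivatives recorded by `D`. -/
def HasWeakDerivs (n m : ℕ) (u : Euc n → ℝ)
    (D : (h : ℕ) → Euc n → (Fin h → Fin n) → ℝ) : Prop :=
  (∀ x d, D 0 x d = u x) ∧
  ∀ h : ℕ, h ≤ m → ∀ dirs : Fin h → Fin n,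
    LocallyIntegrable (fun x => D h x dirs) volume ∧
    ∀ φ : Euc n → ℝ, ContDiff ℝ (⊤ : ℕ∞) φ → HasCompactSupport φ →
      ∫ x : Euc n, u x *
          iteratedFDeriv ℝ h φ x (fun i => EuclideanSpace.single (dirs i) (1 : ℝ)) =
        (-1 : ℝ) ^ h * ∫ x : Euc n, D h x dirs * φ x

/-- The Euclidean length `|∇^h u|(x)` of the `h`-th order weak gradient. -/
def gradLen (n : ℕ) (D : (h : ℕ) → Euc n → (Fin h → Fin n) → ℝ) (h : ℕ) (x : Euc n) : ℝ :=
  Real.sqrt (∑ d : Fin h → Fin n, (D h x d) ^ 2)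

/-- The derivatives of orders `k, …, m` decay near infinity:
`|{|∇^h u| > t}| < ∞` for every `t > 0`. -/
def DecayFrom (n k m : ℕ) (D : (h : ℕ) → Euc n → (Fin h → Fin n) → ℝ) : Prop :=
  ∀ h : ℕ, k ≤ h → h ≤ m → ∀ t : ℝ, 0 < t →
    volume {x : Euc n | t < gradLen n D h x} < ⊤

/-- The Young function `F_k(t) = t^{n/(n-s+k+1)} ∫_0^t Ã(τ) τ^{-1-n/(n-s+k+1)} dτ`. -/
def Fk (n : ℕ) (s : ℝ) (k : ℕ) (A : ℝ → ℝ≥0∞) (t : ℝ) : ℝ≥0∞ :=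
  ENNReal.ofReal (t ^ ((n : ℝ) / ((n : ℝ) - s + (k : ℝ) + 1))) *
    ∫⁻ τ in Set.Ioc (0 : ℝ) t,
      youngConj A τ * ENNReal.ofReal (τ ^ (-1 - (n : ℝ) / ((n : ℝ) - s + (k : ℝ) + 1)))

/-- `ψ^k_{s,A}(r) = 1 / (r^{n-s+k} F_k⁻¹(r^{-n}))`. -/
def psiK (n : ℕ) (s : ℝ) (k : ℕ) (A : ℝ → ℝ≥0∞) (r : ℝ) : ℝ :=
  (r ^ ((n : ℝ) - s + (k : ℝ)) * rcInv (Fk n s k A) (ENNReal.ofReal (r ^ (-(n : ℝ)))))⁻¹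

/-- `ψ^{[s]}_{s,A}(r) = r^{{s}} A⁻¹(r^{-n})`. -/
def psiTop (n : ℕ) (s : ℝ) (A : ℝ → ℝ≥0∞) (r : ℝ) : ℝ :=
  r ^ (s - (⌊s⌋₊ : ℝ)) * rcInv A (ENNReal.ofReal (r ^ (-(n : ℝ))))

/-- Convergence near zero of `∫_0 (t/A(t))^{(s-(k+1))/(n-(s-(k+1)))} dt`. -/
def IntCondK (n : ℕ) (s : ℝ) (k : ℕ) (A : ℝ → ℝ≥0∞) : Prop :=
  ∃ ε : ℝ, 0 < ε ∧
    ∫⁻ t in Set.Ioc (0 : ℝ) ε,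
      (ENNReal.ofReal t / A t) ^ ((s - (k : ℝ) - 1) / ((n : ℝ) - (s - (k : ℝ) - 1))) < ⊤

/-- `P` is the projection polynomial `P^k_B[u]`: it has degree at most `k` and its
derivatives up to order `k` match, in the mean over `B`, the weak derivatives `D` of `u`. -/
def IsCampPoly (n k : ℕ) (D : (h : ℕ) → Euc n → (Fin h → Fin n) → ℝ)
    (B : Set (Euc n)) (P : MvPolynomial (Fin n) ℝ) : Prop :=
  P.totalDegree ≤ k ∧
  ∀ h : ℕ, h ≤ k → ∀ dirs : Fin h → Fin n,
    ∫ x in B, D h x dirs =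
      ∫ x in B,
        iteratedFDeriv ℝ h (fun y : Euc n => MvPolynomial.eval (fun i => y i) P) x
          (fun i => EuclideanSpace.single (dirs i) (1 : ℝ))

/-- The normalized oscillation of order `k` over the ball `B(x,r)`. -/
def oscQuotK (n k : ℕ) (φ : ℝ → ℝ) (u : Euc n → ℝ)
    (D : (h : ℕ) → Euc n → (Fin h → Fin n) → ℝ) (x : Euc n) (r : ℝ) : ℝ≥0∞ :=
  ⨅ (P : MvPolynomial (Fin n) ℝ) (_ : IsCampPoly n k D (ball x r) P),
    ENNReal.ofReal
      ((φ ((volume (ball x r)).toReal ^ ((n : ℝ)⁻¹)) *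
          (volume (ball x r)).toReal ^ ((k : ℝ) / (n : ℝ)))⁻¹ *
        ⨍ y in ball x r, |u y - MvPolynomial.eval (fun i => y i) P|)

/-- The `k`-th order Campanato seminorm `|u|_{𝓛^{k,φ}(ℝⁿ)}`. -/
def campSemK (n k : ℕ) (φ : ℝ → ℝ) (u : Euc n → ℝ)
    (D : (h : ℕ) → Euc n → (Fin h → Fin n) → ℝ) : ℝ≥0∞ :=
  ⨆ (x : Euc n) (r : ℝ) (_ : 0 < r), oscQuotK n k φ u D x r

/-- The `k`-th order Campanato quantity restricted to balls of measure at most `r`. -/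
def campSemKSmall (n k : ℕ) (φ : ℝ → ℝ) (u : Euc n → ℝ)
    (D : (h : ℕ) → Euc n → (Fin h → Fin n) → ℝ) (r : ℝ) : ℝ≥0∞ :=
  ⨆ (x : Euc n) (ρ : ℝ) (_ : 0 < ρ) (_ : volume (ball x ρ) ≤ ENNReal.ofReal r),
    oscQuotK n k φ u D x ρ

/-- The Luxemburg norm `‖f‖_{L^A(μ)}`. -/
def luxNorm {α : Type*} [MeasurableSpace α] (A : ℝ → ℝ≥0∞) (μ : Measure α)
    (f : α → ℝ) : ℝ≥0∞ :=
  sInf (ENNReal.ofReal '' {lam : ℝ | 0 < lam ∧ ∫⁻ x, A (|f x| / lam) ∂μ ≤ 1})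

/-- Iterated integral `∫_r^∞ ∫_{r_1}^∞ ⋯ g`. -/
def iterInt : ℕ → (ℝ → ℝ) → (ℝ → ℝ)
  | 0, g => g
  | j + 1, g => fun r => ∫ t in Set.Ioi r, iterInt j g t

end

noncomputable section AuxStmt0

namespace Stmt0Aux

variable {A : ℝ → ℝ≥0∞}

lemma young_scale (hA : IsYoung A) {t x : ℝ} (ht0 : 0 ≤ t) (ht1 : t ≤ 1) (hx : 0 ≤ x) :
    A (t * x) ≤ ENNReal.ofReal t * A x := by
  have h := hA.2.1 x 0 t hx le_rfl ht0 ht1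
  simpa [hA.1] using h

lemma young_mono (hA : IsYoung A) {a b : ℝ} (ha : 0 ≤ a) (hab : a ≤ b) : A a ≤ A b := by
  rcases eq_or_lt_of_le (ha.trans hab) with hb | hb
  · have : a = 0 := le_antisymm (hab.trans hb.symm.le) ha
    simp [this, ← hb, hA.1]
  · have hb' : b ≠ 0 := ne_of_gt hb
    have h := young_scale hA (t := a / b) (x := b) (div_nonneg ha hb.le)
      ((div_le_one hb).2 hab) hb.le
    rw [div_mul_cancel₀ _ hb'] at h
    calc A a ≤ ENNReal.ofReal (a / b) * A b := h
    _ ≤ 1 * A b := by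
        gcongr
        exact ENNReal.ofReal_le_one.2 ((div_le_one hb).2 hab)
    _ = A b := one_mul _

lemma young_lower (hA : IsYoung A) {t₀ b : ℝ} (h0 : 0 < t₀) (hb : t₀ ≤ b) :
    ENNReal.ofReal (b / t₀) * A t₀ ≤ A b := by
  have hbpos : 0 < b := h0.trans_le hb
  have h := young_scale hA (t := t₀ / b) (x := b) (div_nonneg h0.le hbpos.le)
    ((div_le_one hbpos).2 hb) hbpos.le
  rw [div_mul_cancel₀ _ hbpos.ne'] at h
  calc ENNReal.ofReal (b / t₀) * A t₀
      ≤ ENNReal.ofReal (b / t₀) * (ENNReal.ofReal (t₀ / b) * A b) := by gcongr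
    _ = ENNReal.ofReal ((b / t₀) * (t₀ / b)) * A b := by
        rw [← mul_assoc, ← ENNReal.ofReal_mul (by positivity)]
    _ = A b := by
        rw [div_mul_div_comm, mul_comm b t₀, div_self (by positivity), ENNReal.ofReal_one, one_mul]

lemma rcInv_nonneg (A : ℝ → ℝ≥0∞) (v : ℝ≥0∞) : 0 ≤ rcInv A v :=
  Real.sInf_nonneg fun _ hx => hx.1

lemma le_rcInv (hA : IsYoung A) {v : ℝ≥0∞} {t : ℝ} (ht : 0 ≤ t) (hAt : A t ≤ v)
    (hpos : 0 < rcInv A v) : t ≤ rcInv A v := by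
  by_cases hS : {τ : ℝ | 0 ≤ τ ∧ v < A τ}.Nonempty
  · refine le_csInf hS fun τ hτ => ?_
    by_contra hlt
    push_neg at hlt
    exact absurd (young_mono hA hτ.1 hlt.le) (not_le.2 (lt_of_le_of_lt hAt hτ.2))
  · rw [Set.not_nonempty_iff_eq_empty] at hS
    rw [rcInv, hS] at hpos
    simp [Real.sInf_empty] at hpos

/-- Lossy Jensen inequality. -/
lemma jensen_half {α : Type*} [MeasurableSpace α] (μ : Measure α) [IsFiniteMeasure μ]
    (hA : IsYoung A) {f : α → ℝ} (hfm : Measurable f) (hf0 : ∀ x, 0 ≤ f x)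
    (hfi : Integrable f μ) :
    A (((μ Set.univ).toReal⁻¹ * ∫ x, f x ∂μ) / 2) * μ Set.univ ≤ ∫⁻ x, A (f x) ∂μ := by
  set M : ℝ := (μ Set.univ).toReal with hM
  have hMfin : μ Set.univ ≠ ⊤ := measure_ne_top μ _
  set m : ℝ := M⁻¹ * ∫ x, f x ∂μ with hm
  have hm0 : 0 ≤ m := mul_nonneg (inv_nonneg.2 ENNReal.toReal_nonneg)
    (integral_nonneg hf0)
  rcases eq_or_lt_of_le hm0 with h0 | hmpos
  · rw [← h0]
    simp [hA.1]
  have hMpos : 0 < M := by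
    by_contra h
    push_neg at h
    have : M = 0 := le_antisymm h ENNReal.toReal_nonneg
    rw [hm, this] at hmpos
    simp at hmpos
  have hμuniv : μ Set.univ = ENNReal.ofReal M := (ENNReal.ofReal_toReal hMfin).symm
  set t₀ : ℝ := m / 2 with ht₀
  have ht₀pos : 0 < t₀ := by positivity
  set E : Set α := {x | t₀ < f x} with hE
  have hEm : MeasurableSet E := measurableSet_lt measurable_const hfm
  have hcompl : ∫ x in Eᶜ, f x ∂μ ≤ t₀ * M := by
    calc ∫ x in Eᶜ, f x ∂μ ≤ ∫ _x in Eᶜ, t₀ ∂μ := by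
          refine setIntegral_mono_on hfi.integrableOn (integrableOn_const ?_) hEm.compl ?_
          · exact measure_ne_top μ _
          · intro x hx
            exact not_lt.1 (by simpa [hE, E] using hx)
      _ = (μ Eᶜ).toReal * t₀ := by rw [setIntegral_const, smul_eq_mul, Measure.real_def]
      _ ≤ M * t₀ := by
          gcongr
          exact ENNReal.toReal_mono hMfin (measure_mono (Set.subset_univ _))
      _ = t₀ * M := mul_comm _ _
  have htotal : ∫ x, f x ∂μ = m * M := by
    rw [hm]; field_simp
  have hEint : t₀ * M ≤ ∫ x in E, f x ∂μ := by
    have hsplit : ∫ x in E, f x ∂μ + ∫ x in Eᶜ, f x ∂μ = ∫ x, f x ∂μ :=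
      integral_add_compl hEm hfi
    nlinarith [hcompl, htotal, ht₀]
  have hpt : ∀ x ∈ E, ENNReal.ofReal (f x / t₀) * A t₀ ≤ A (f x) := fun x hx =>
    young_lower hA ht₀pos (le_of_lt hx)
  calc A t₀ * μ Set.univ = A t₀ * ENNReal.ofReal M := by rw [hμuniv]
    _ ≤ A t₀ * ENNReal.ofReal ((∫ x in E, f x ∂μ) / t₀) := by
        gcongr
        rw [le_div_iff₀ ht₀pos]
        linarith [hEint]
    _ ≤ A t₀ * ∫⁻ x in E, ENNReal.ofReal (f x / t₀) ∂μ := by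
        gcongr
        have : ENNReal.ofReal ((∫ x in E, f x ∂μ) / t₀) =
            ENNReal.ofReal (∫ x in E, f x / t₀ ∂μ) := by rw [integral_div]
        rw [this]
        rw [ofReal_integral_eq_lintegral_ofReal
          (hfi.integrableOn.div_const _) (Eventually.of_forall fun x => div_nonneg (hf0 x) ht₀pos.le)]
    _ = ∫⁻ x in E, ENNReal.ofReal (f x / t₀) * A t₀ ∂μ := by
        rw [lintegral_mul_const _ ((hfm.div_const t₀).ennreal_ofReal), mul_comm]
    _ ≤ ∫⁻ x in E, A (f x) ∂μ := setLIntegral_mono' hEm hpt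
    _ ≤ ∫⁻ x, A (f x) ∂μ := setLIntegral_le_lintegral _ _

lemma integrable_comp_fst {α β : Type*} [MeasurableSpace α] [MeasurableSpace β]
    {μ : Measure α} {ν : Measure β} [SFinite ν] [IsFiniteMeasure ν]
    {f : α → ℝ} (hm : Measurable f) (hf : Integrable f μ) :
    Integrable (fun p : α × β => f p.1) (μ.prod ν) := by
  refine ⟨(hm.comp measurable_fst).aestronglyMeasurable, ?_⟩
  rw [hasFiniteIntegral_def]
  have h1 : ∫⁻ p : α × β, (‖f p.1‖₊ : ℝ≥0∞) ∂(μ.prod ν)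
      = ∫⁻ x, ∫⁻ _y, (‖f x‖₊ : ℝ≥0∞) ∂ν ∂μ :=
    lintegral_prod _ ((hm.comp measurable_fst).nnnorm.coe_nnreal_ennreal.aemeasurable)
  simp only [enorm_eq_nnnorm]
  rw [h1]
  simp only [lintegral_const]
  rw [lintegral_mul_const' _ _ (measure_ne_top ν _)]
  exact ENNReal.mul_lt_top hf.2 (measure_lt_top ν _)

lemma integrable_comp_snd {α β : Type*} [MeasurableSpace α] [MeasurableSpace β]
    {μ : Measure α} {ν : Measure β} [SFinite ν] [IsFiniteMeasure μ]
    {f : β → ℝ} (hm : Measurable f) (hf : Integrable f ν) :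
    Integrable (fun p : α × β => f p.2) (μ.prod ν) := by
  refine ⟨(hm.comp measurable_snd).aestronglyMeasurable, ?_⟩
  rw [hasFiniteIntegral_def]
  have h1 : ∫⁻ p : α × β, (‖f p.2‖₊ : ℝ≥0∞) ∂(μ.prod ν)
      = ∫⁻ _x, ∫⁻ y, (‖f y‖₊ : ℝ≥0∞) ∂ν ∂μ :=
    lintegral_prod _ ((hm.comp measurable_snd).nnnorm.coe_nnreal_ennreal.aemeasurable)
  simp only [enorm_eq_nnnorm]
  rw [h1]
  rw [lintegral_const]
  exact ENNReal.mul_lt_top hf.2 (measure_lt_top μ _)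

/-- The volume of the unit ball. -/
def omegaN (n : ℕ) : ℝ := (volume (ball (0 : Euc n) 1)).toReal

/-- Constant in the main estimate. -/
def bigC (n : ℕ) : ℝ := max ((2 : ℝ) ^ n / omegaN n) 1

/-- The constant for statement 0. -/
def cCon (n : ℕ) (s : ℝ) : ℝ := 2 * bigC n * (2 / omegaN n ^ ((n : ℝ)⁻¹)) ^ s


lemma cCon_pos {n : ℕ} (hn : 0 < n) (s : ℝ) : 0 < cCon n s := by
  haveI : Nonempty (Fin n) := Fin.pos_iff_nonempty.mp hn
  have hωpos : 0 < omegaN n :=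
    ENNReal.toReal_pos (measure_ball_pos volume _ one_pos).ne' measure_ball_lt_top.ne
  have h1 : (0:ℝ) < bigC n := lt_of_lt_of_le one_pos (le_max_right _ _)
  have h2 : (0:ℝ) < 2 / omegaN n ^ ((n : ℝ)⁻¹) := by positivity
  have h3 := Real.rpow_pos_of_pos h2 s
  unfold cCon
  positivity

lemma key (n : ℕ) (hn : 0 < n) {s : ℝ} (hs : s ∈ Set.Ioo (0 : ℝ) 1)
    (hA : IsYoung A) {u : Euc n → ℝ} (hu : Measurable u) {lam : ℝ} (hlam : 0 < lam)
    (hJ : Jfun n s A (fun x (_ : Fin 1) => u x / lam) ≤ 1) (x₀ : Euc n) {r : ℝ} (hr : 0 < r) :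
    oscQuot n (phiSA n s A) u x₀ r ≤ cCon n s * lam := by
  haveI : Nonempty (Fin n) := Fin.pos_iff_nonempty.mp hn
  have hccon : 0 < cCon n s := cCon_pos hn s
  have hB0 : volume (ball x₀ r) ≠ 0 := (measure_ball_pos volume x₀ hr).ne'
  have hBtop : volume (ball x₀ r) ≠ ⊤ := measure_ball_lt_top.ne
  set V : ℝ := (volume (ball x₀ r)).toReal with hVdef
  have hVpos : 0 < V := ENNReal.toReal_pos hB0 hBtop
  have hωpos : 0 < omegaN n :=
    ENNReal.toReal_pos (measure_ball_pos volume _ one_pos).ne' measure_ball_lt_top.ne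
  have hvol : volume (ball x₀ r) = ENNReal.ofReal (r ^ n) * volume (ball (0 : Euc n) 1) := by
    simpa [finrank_euclideanSpace_fin] using
      Measure.addHaar_ball (volume : Measure (Euc n)) x₀ hr.le
  have hVform : V = r ^ n * omegaN n := by
    rw [hVdef, hvol, ENNReal.toReal_mul, ENNReal.toReal_ofReal (by positivity)]
    rfl
  have hnR : (0:ℝ) < (n:ℝ) := by exact_mod_cast hn
  set ρ : ℝ := V ^ ((n : ℝ)⁻¹) with hρdef
  have hρform : ρ = r * omegaN n ^ ((n : ℝ)⁻¹) := by
    rw [hρdef, hVform, Real.mul_rpow (by positivity) hωpos.le, ← Real.rpow_natCast r n,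
      ← Real.rpow_mul hr.le, mul_inv_cancel₀ hnR.ne', Real.rpow_one]
  have hρpos : 0 < ρ := by rw [hρform]; positivity
  have harg : ENNReal.ofReal (ρ ^ (-(n : ℝ))) = ENNReal.ofReal V⁻¹ := by
    rw [hρdef, ← Real.rpow_mul hVpos.le]
    have hexp : (n : ℝ)⁻¹ * (-(n : ℝ)) = -1 := by field_simp
    rw [hexp, Real.rpow_neg_one]
  set T : ℝ := rcInv A (ENNReal.ofReal (ρ ^ (-(n : ℝ)))) with hTdef
  have hTnn : 0 ≤ T := rcInv_nonneg _ _
  have hosc : oscQuot n (phiSA n s A) u x₀ r =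
      (ρ ^ s * T)⁻¹ * ⨍ y in ball x₀ r, |u y - ⨍ z in ball x₀ r, u z| := by
    rw [oscQuot, phiSA]
  rcases eq_or_lt_of_le hTnn with hT0 | hTpos
  · rw [hosc, ← hT0, mul_zero, inv_zero, zero_mul]
    positivity
  by_cases hInt : IntegrableOn u (ball x₀ r) volume
  swap
  · have hzero : ∫ z in ball x₀ r, u z ∂volume = 0 := integral_undef hInt
    have hub : (⨍ z in ball x₀ r, u z) = 0 := by
      rw [setAverage_eq, hzero, smul_zero]
    have habs : ¬ Integrable (fun y => |u y|) (volume.restrict (ball x₀ r)) := by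
      intro hcon
      refine hInt ⟨hu.aestronglyMeasurable, ?_⟩
      have h2 := hcon.2
      rw [hasFiniteIntegral_def] at h2 ⊢
      simpa using h2
    have hN : (⨍ y in ball x₀ r, |u y - ⨍ z in ball x₀ r, u z|) = 0 := by
      rw [hub]
      simp only [sub_zero]
      rw [setAverage_eq, integral_undef habs, smul_zero]
    rw [hosc, hN, mul_zero]
    positivity
  -- main case
  set B := ball x₀ r with hBdef
  set π := (volume.restrict B).prod (volume.restrict B) with hπdef
  haveI : IsFiniteMeasure (volume.restrict B) :=
    ⟨by rw [Measure.restrict_apply_univ]; exact measure_ball_lt_top⟩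
  set F : Euc n × Euc n → ℝ := fun p => |u p.1 - u p.2| with hFdef
  have hFm : Measurable F := ((hu.comp measurable_fst).sub (hu.comp measurable_snd)).abs
  have hF0 : ∀ p, 0 ≤ F p := fun p => abs_nonneg _
  have hFint : Integrable F π :=
    ((integrable_comp_fst hu hInt).sub (integrable_comp_snd hu hInt)).abs
  have hA'mono : Monotone (fun t : ℝ => A (max t 0)) := fun a b hab =>
    young_mono hA (le_max_right _ _) (max_le_max hab le_rfl)
  have hA'meas : Measurable (fun t : ℝ => A (max t 0)) := hA'mono.measurable
  set e : ℝ := lam * (2 * r) ^ s with hedef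
  have h2rs0 : (0:ℝ) < (2*r) ^ s := Real.rpow_pos_of_pos (by positivity) _
  have hepos : 0 < e := by rw [hedef]; positivity
  -- Step 1
  have h2rpos : (0:ℝ) < (2*r) ^ ((n:ℝ)) := Real.rpow_pos_of_pos (by positivity) _
  set c2 : ℝ≥0∞ := ENNReal.ofReal ((2*r) ^ ((n:ℝ))) with hc2
  have hc2ne0 : c2 ≠ 0 := by
    simp only [hc2, ne_eq, ENNReal.ofReal_eq_zero, not_le]
    exact h2rpos
  have hc2top : c2 ≠ ⊤ := ENNReal.ofReal_ne_top
  have hpt : ∀ y ∈ B, ∀ z ∈ B, A (|u y - u z| / e) / c2 ≤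
      A (Real.sqrt (∑ i : Fin 1, ((u y / lam) - (u z / lam)) ^ 2) / ‖y - z‖ ^ s) /
        ENNReal.ofReal (‖y - z‖ ^ (n : ℝ)) := by
    intro y hy z hz
    by_cases hyz : y = z
    · subst hyz
      have h0 : |u y - u y| / e = 0 := by simp
      rw [h0, hA.1, ENNReal.zero_div]
      exact zero_le
    · have hnz : 0 < ‖y - z‖ := norm_pos_iff.2 (sub_ne_zero.2 hyz)
      have hlt : ‖y - z‖ < 2*r := by
        have h1 : dist y z < 2*r := by
          calc dist y z ≤ dist y x₀ + dist x₀ z := dist_triangle _ _ _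
            _ < r + r := add_lt_add (mem_ball.1 hy) (by rw [dist_comm]; exact mem_ball.1 hz)
            _ = 2*r := by ring
        simpa [dist_eq_norm] using h1
      have hsqrt : Real.sqrt (∑ i : Fin 1, (u y / lam - u z / lam) ^ 2)
          = |u y - u z| / lam := by
        rw [Fin.sum_univ_one, Real.sqrt_sq_eq_abs, ← sub_div, abs_div, abs_of_pos hlam]
      rw [hsqrt]
      refine ENNReal.div_le_div ?_ ?_
      · refine young_mono hA (by positivity) ?_
        rw [div_div]
        have hss : ‖y - z‖ ^ s ≤ (2*r) ^ s := Real.rpow_le_rpow hnz.le hlt.le hs.1.le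
        have h1 : (0:ℝ) < ‖y - z‖ ^ s := Real.rpow_pos_of_pos hnz s
        rw [hedef]
        gcongr
      · exact ENNReal.ofReal_le_ofReal (Real.rpow_le_rpow hnz.le hlt.le hnR.le)
  have hiter : (∫⁻ y in B, ∫⁻ z in B, A (|u y - u z| / e) ∂volume ∂volume) / c2 ≤ 1 := by
    have h1 : ∫⁻ y in B, ∫⁻ z in B, A (|u y - u z| / e) / c2 ∂volume ∂volume ≤ 1 := by
      calc ∫⁻ y in B, ∫⁻ z in B, A (|u y - u z| / e) / c2 ∂volume ∂volume
          ≤ ∫⁻ y in B, ∫⁻ z in B,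
              A (Real.sqrt (∑ i : Fin 1, ((u y / lam) - (u z / lam)) ^ 2) / ‖y - z‖ ^ s) /
                ENNReal.ofReal (‖y - z‖ ^ (n : ℝ)) ∂volume ∂volume :=
            setLIntegral_mono' measurableSet_ball (fun y hy =>
              setLIntegral_mono' measurableSet_ball (fun z hz => hpt y hy z hz))
        _ ≤ ∫⁻ y in B, ∫⁻ z,
              A (Real.sqrt (∑ i : Fin 1, ((u y / lam) - (u z / lam)) ^ 2) / ‖y - z‖ ^ s) /
                ENNReal.ofReal (‖y - z‖ ^ (n : ℝ)) ∂volume ∂volume :=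
            lintegral_mono (fun y => setLIntegral_le_lintegral _ _)
        _ ≤ ∫⁻ y, ∫⁻ z,
              A (Real.sqrt (∑ i : Fin 1, ((u y / lam) - (u z / lam)) ^ 2) / ‖y - z‖ ^ s) /
                ENNReal.ofReal (‖y - z‖ ^ (n : ℝ)) ∂volume ∂volume :=
            setLIntegral_le_lintegral _ _
        _ = Jfun n s A (fun x (_ : Fin 1) => u x / lam) := rfl
        _ ≤ 1 := hJ
    have hne : c2⁻¹ ≠ ⊤ := ENNReal.inv_ne_top.2 hc2ne0
    calc (∫⁻ y in B, ∫⁻ z in B, A (|u y - u z| / e) ∂volume ∂volume) / c2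
        = ∫⁻ y in B, ∫⁻ z in B, A (|u y - u z| / e) / c2 ∂volume ∂volume := by
          simp_rw [div_eq_mul_inv, lintegral_mul_const' _ _ hne]
      _ ≤ 1 := h1
  have hstep1 : (∫⁻ y in B, ∫⁻ z in B, A (|u y - u z| / e) ∂volume ∂volume) ≤ c2 := by
    rw [ENNReal.div_le_iff hc2ne0 hc2top] at hiter
    simpa using hiter
  -- Step 2
  set d : ℝ := bigC n * e with hddef
  have hCpos : (0:ℝ) < bigC n := lt_of_lt_of_le one_pos (le_max_right _ _)
  have hC1 : (1:ℝ) ≤ bigC n := le_max_right _ _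
  have hdpos : 0 < d := by rw [hddef]; positivity
  have hprodW : ∫⁻ p, A (F p / e) ∂π
      = ∫⁻ y in B, ∫⁻ z in B, A (|u y - u z| / e) ∂volume ∂volume := by
    have hrew : ∀ v w : Euc n, max (|u v - u w| / e) 0 = |u v - u w| / e :=
      fun v w => max_eq_left (by positivity)
    have h := lintegral_prod (μ := volume.restrict B) (ν := volume.restrict B)
      (fun p : Euc n × Euc n => A (max (F p / e) 0))
      ((hA'meas.comp (hFm.div_const e)).aemeasurable)
    simp only [hFdef, hrew] at h
    exact h
  have hstep2 : ∫⁻ p, A (F p / d) ∂π ≤ ENNReal.ofReal V := by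
    have hC0 : (0:ℝ) ≤ (bigC n)⁻¹ := by positivity
    have hC1' : (bigC n)⁻¹ ≤ 1 := inv_le_one_of_one_le₀ hC1
    have hptw : ∀ p, A (F p / d) ≤ ENNReal.ofReal (bigC n)⁻¹ * A (F p / e) := by
      intro p
      have heq : F p / d = (bigC n)⁻¹ * (F p / e) := by
        rw [hddef]
        field_simp
      rw [heq]
      exact young_scale hA hC0 hC1' (by positivity)
    calc ∫⁻ p, A (F p / d) ∂π ≤ ∫⁻ p, ENNReal.ofReal (bigC n)⁻¹ * A (F p / e) ∂π :=
          lintegral_mono hptw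
      _ = ENNReal.ofReal (bigC n)⁻¹ * ∫⁻ p, A (F p / e) ∂π :=
          lintegral_const_mul' _ _ ENNReal.ofReal_ne_top
      _ ≤ ENNReal.ofReal (bigC n)⁻¹ * c2 := by
          rw [hprodW]
          exact mul_le_mul_right hstep1 _
      _ = ENNReal.ofReal ((bigC n)⁻¹ * (2*r) ^ ((n:ℝ))) := by
          rw [hc2, ← ENNReal.ofReal_mul hC0]
      _ ≤ ENNReal.ofReal V := by
          apply ENNReal.ofReal_le_ofReal
          have h2rn : (2*r) ^ ((n:ℝ)) = 2 ^ n * r ^ n := by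
            rw [Real.rpow_natCast, mul_pow]
          rw [h2rn, hVform]
          have hCge : (2:ℝ) ^ n / omegaN n ≤ bigC n := le_max_left _ _
          have hinv : (bigC n)⁻¹ ≤ omegaN n / 2 ^ n := by
            calc (bigC n)⁻¹ ≤ ((2:ℝ) ^ n / omegaN n)⁻¹ :=
                  inv_anti₀ (by positivity) hCge
              _ = omegaN n / 2 ^ n := by rw [inv_div]
          calc (bigC n)⁻¹ * (2 ^ n * r ^ n) ≤ (omegaN n / 2 ^ n) * (2 ^ n * r ^ n) :=
                mul_le_mul_of_nonneg_right hinv (by positivity)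
            _ = r ^ n * omegaN n := by field_simp
  -- Step 3-5 : Jensen
  have hπuniv : π Set.univ = volume B * volume B := by
    rw [hπdef, ← Set.univ_prod_univ, Measure.prod_prod, Measure.restrict_apply_univ]
  have hπtop : π Set.univ ≠ ⊤ := by
    rw [hπuniv]; exact ENNReal.mul_ne_top hBtop hBtop
  have hMπ : (π Set.univ).toReal = V * V := by rw [hπuniv, ENNReal.toReal_mul]
  set avg : ℝ := (V*V)⁻¹ * ∫ p, F p ∂π with havgdef
  have havg0 : 0 ≤ avg := mul_nonneg (by positivity) (integral_nonneg hF0)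
  have hjen := jensen_half π hA (hFm.div_const d) (fun p => by positivity)
    (hFint.div_const d)
  have hmeq : ((π Set.univ).toReal⁻¹ * ∫ p, F p / d ∂π) = avg / d := by
    rw [hMπ, integral_div, havgdef]; ring
  rw [hmeq] at hjen
  have hjen2 : A (avg / d / 2) ≤ ENNReal.ofReal (ρ ^ (-(n:ℝ))) := by
    rw [harg]
    have h1 : A (avg / d / 2) * π Set.univ ≤ ENNReal.ofReal V := le_trans hjen hstep2
    have hπ0 : π Set.univ ≠ 0 := by
      rw [hπuniv]; exact mul_ne_zero hB0 hB0
    have h2 : A (avg / d / 2) ≤ ENNReal.ofReal V / π Set.univ :=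
      (ENNReal.le_div_iff_mul_le (Or.inl hπ0) (Or.inl hπtop)).2 h1
    refine h2.trans ?_
    have hBV : π Set.univ = ENNReal.ofReal (V * V) := by
      rw [hπuniv, ENNReal.ofReal_mul hVpos.le, hVdef,
        ENNReal.ofReal_toReal hBtop]
    rw [hBV, ← ENNReal.ofReal_div_of_pos (by positivity)]
    apply ENNReal.ofReal_le_ofReal
    have hVV : V / (V*V) = V⁻¹ := by field_simp
    rw [hVV]
  have hT5 : avg / d / 2 ≤ T := le_rcInv hA (by positivity) hjen2 hTpos
  have havgle : avg ≤ T * (d * 2) := by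
    rw [div_div] at hT5
    exact (div_le_iff₀ (by positivity)).1 hT5
  -- Step 6 : mean oscillation is at most the double average
  set uB : ℝ := ⨍ z in B, u z with huB
  have hInt' : Integrable u (volume.restrict B) := hInt
  have hmean : ∀ y : Euc n, |u y - uB| ≤ V⁻¹ * ∫ z in B, |u y - u z| ∂volume := by
    intro y
    have h1 : ∫ z in B, (u y - u z) ∂volume = V * u y - ∫ z in B, u z ∂volume := by
      rw [integral_sub (integrableOn_const measure_ball_lt_top.ne : IntegrableOn (fun _ : Euc n => u y) B volume) hInt,
        setIntegral_const, smul_eq_mul, Measure.real_def]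
    have h2 : u y - uB = V⁻¹ * ∫ z in B, (u y - u z) ∂volume := by
      rw [h1, huB, setAverage_eq, smul_eq_mul, Measure.real_def, hVdef]
      have hV0 : (volume B).toReal ≠ 0 := hVpos.ne'
      field_simp
    rw [h2, abs_mul, abs_of_nonneg (inv_nonneg.2 hVpos.le)]
    have h3 : |∫ z in B, (u y - u z) ∂volume| ≤ ∫ z in B, |u y - u z| ∂volume := by
      simpa [Real.norm_eq_abs] using
        norm_integral_le_integral_norm (μ := volume.restrict B) (fun z => u y - u z)
    exact mul_le_mul_of_nonneg_left h3 (inv_nonneg.2 hVpos.le)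
  have hgint : Integrable (fun y => V⁻¹ * ∫ z in B, |u y - u z| ∂volume)
      (volume.restrict B) := by
    have h := hFint.integral_prod_left
    exact h.const_mul _
  have hNle : (⨍ y in B, |u y - uB|) ≤ avg := by
    have hint1 : Integrable (fun y => |u y - uB|) (volume.restrict B) :=
      (hInt'.sub (integrable_const _)).abs
    have h1 : (∫ y in B, |u y - uB| ∂volume) ≤
        ∫ y in B, (V⁻¹ * ∫ z in B, |u y - u z| ∂volume) ∂volume :=
      integral_mono hint1 hgint hmean
    have h2 : (∫ y in B, (V⁻¹ * ∫ z in B, |u y - u z| ∂volume) ∂volume)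
        = V⁻¹ * ∫ y in B, ∫ z in B, |u y - u z| ∂volume ∂volume :=
      integral_const_mul _ _
    have h3 : (∫ y in B, ∫ z in B, |u y - u z| ∂volume ∂volume) = ∫ p, F p ∂π :=
      integral_integral hFint
    rw [setAverage_eq, smul_eq_mul, Measure.real_def, ← hVdef]
    calc V⁻¹ * ∫ y in B, |u y - uB| ∂volume
        ≤ V⁻¹ * (V⁻¹ * ∫ p, F p ∂π) := by
          refine mul_le_mul_of_nonneg_left ?_ (inv_nonneg.2 hVpos.le)
          rw [← h3, ← h2]; exact h1
      _ = avg := by rw [havgdef, mul_inv]; ring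
  -- Final computation
  rw [hosc]
  have hρs : (0:ℝ) < ρ ^ s := Real.rpow_pos_of_pos hρpos _
  have hw : (0:ℝ) < omegaN n ^ ((n:ℝ)⁻¹) := Real.rpow_pos_of_pos hωpos _
  have h2rs : (2*r) ^ s = (2 / omegaN n ^ ((n:ℝ)⁻¹)) ^ s * ρ ^ s := by
    rw [← Real.mul_rpow (by positivity) hρpos.le]
    congr 1
    rw [hρform]; field_simp
  calc (ρ ^ s * T)⁻¹ * (⨍ y in B, |u y - ⨍ z in B, u z|)
      ≤ (ρ ^ s * T)⁻¹ * (T * (d * 2)) := by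
        refine mul_le_mul_of_nonneg_left ?_ (by positivity)
        exact le_trans hNle havgle
    _ = cCon n s * lam := by
        rw [hddef, hedef, h2rs, cCon]
        field_simp

end Stmt0Aux

end AuxStmt0
/-- Optimal embedding of `V^{s,A}(ℝⁿ)` into the Campanato space
`𝓛^{φ_{s,A}}(ℝⁿ)` for `s ∈ (0,1)`: there is `c = c(n,s)` with
`|u|_{𝓛^{φ_{s,A}}} ≤ c |u|_{s,A,ℝⁿ}` for every `u ∈ V^{s,A}(ℝⁿ)`. -/
theorem stmt0 (n : ℕ) (hn : 0 < n) (s : ℝ) (hs : s ∈ Set.Ioo (0 : ℝ) 1) :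
    ∃ c : ℝ, 0 < c ∧ ∀ A : ℝ → ℝ≥0∞, IsYoung A →
      ∀ u : Euc n → ℝ, Measurable u → fracSemS n s A u < ⊤ →
        campSem n (phiSA n s A) u ≤ ENNReal.ofReal c * fracSemS n s A u := by
  refine ⟨Stmt0Aux.cCon n s, Stmt0Aux.cCon_pos hn s, ?_⟩
  intro A hA u hu _hfin
  have hc0 : ENNReal.ofReal (Stmt0Aux.cCon n s) ≠ 0 := by
    simp only [ne_eq, ENNReal.ofReal_eq_zero, not_le]
    exact Stmt0Aux.cCon_pos hn s
  have hct : ENNReal.ofReal (Stmt0Aux.cCon n s) ≠ ⊤ := ENNReal.ofReal_ne_top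
  rw [campSem]
  refine iSup_le fun x => iSup_le fun r => iSup_le fun hr => ?_
  rw [fracSemS, fracSem]
  have hdiv : ENNReal.ofReal (oscQuot n (phiSA n s A) u x r) / ENNReal.ofReal (Stmt0Aux.cCon n s)
      ≤ sInf (ENNReal.ofReal ''
        {lam : ℝ | 0 < lam ∧
          Jfun n s A (fun x i => (fun x (_ : Fin 1) => u x) x i / lam) ≤ 1}) := by
    refine le_sInf ?_
    rintro b ⟨lam, ⟨hlam, hJ⟩, rfl⟩
    rw [ENNReal.div_le_iff hc0 hct]
    calc ENNReal.ofReal (oscQuot n (phiSA n s A) u x r)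
        ≤ ENNReal.ofReal (Stmt0Aux.cCon n s * lam) :=
          ENNReal.ofReal_le_ofReal (Stmt0Aux.key n hn hs hA hu hlam hJ x hr)
      _ = ENNReal.ofReal lam * ENNReal.ofReal (Stmt0Aux.cCon n s) := by
          rw [mul_comm, ENNReal.ofReal_mul hlam.le]
  have h2 := (ENNReal.div_le_iff hc0 hct).1 hdiv
  rw [mul_comm] at h2
  exact h2
end

section
/- Let n ∈ ℕ, s ∈ (0,1) and let A be a Young function. If φ is an admissible function and c > 0 is a constant such that |u|_{𝓛^{φ}(ℝⁿ)} ≤ c |u|_{s,A,ℝⁿ} for every u ∈ V^{s,A}(ℝⁿ), then there exists a constant c' > 0 such that φ_{s,A}(r) ≤ c' φ(r) for all r > 0. Hence 𝓛^{φ_{s,A}}(ℝⁿ) is the optimal (smallest) Campanato target space for the embedding of V^{s,A}(ℝⁿ). -/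
open MeasureTheory Metric Set Filter
open scoped ENNReal Topology

noncomputable section Stmt1Aux
namespace Stmt1Aux

open MeasureTheory Metric Set Filter
open scoped ENNReal Topology Pointwise

variable {A : ℝ → ℝ≥0∞}

theorem young_scale (hA : IsYoung A) {t M : ℝ} (ht0 : 0 ≤ t) (ht1 : t ≤ 1) (hM : 0 ≤ M) :
    A (t * M) ≤ ENNReal.ofReal t * A M := by
  have h := hA.2.1 M 0 t hM le_rfl ht0 ht1
  simpa [hA.1] using h

theorem young_mono (hA : IsYoung A) {x y : ℝ} (hx : 0 ≤ x) (hxy : x ≤ y) : A x ≤ A y := by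
  rcases eq_or_lt_of_le (hx.trans hxy) with h0 | hy0
  · rw [← h0] at hxy
    have hx0 : x = 0 := le_antisymm hxy hx
    rw [hx0, ← h0]
  · have h := young_scale hA (t := x / y) (M := y) (div_nonneg hx hy0.le)
      ((div_le_one hy0).2 hxy) hy0.le
    rw [div_mul_cancel₀ _ hy0.ne'] at h
    refine h.trans ?_
    calc ENNReal.ofReal (x / y) * A y ≤ 1 * A y := by
          gcongr
          exact ENNReal.ofReal_le_one.2 ((div_le_one hy0).2 hxy)
      _ = A y := one_mul _

theorem young_superscale (hA : IsYoung A) {k τ : ℝ} (hk : 1 ≤ k) (hτ : 0 ≤ τ) :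
    ENNReal.ofReal k * A τ ≤ A (k * τ) := by
  have hk0 : 0 < k := lt_of_lt_of_le one_pos hk
  have h := young_scale hA (t := k⁻¹) (M := k * τ)
    (inv_nonneg.2 hk0.le) (inv_le_one_of_one_le₀ hk) (by positivity)
  rw [inv_mul_cancel_left₀ hk0.ne'] at h
  calc ENNReal.ofReal k * A τ ≤ ENNReal.ofReal k * (ENNReal.ofReal k⁻¹ * A (k * τ)) := by gcongr
    _ = (ENNReal.ofReal k * ENNReal.ofReal k⁻¹) * A (k * τ) := by rw [mul_assoc]
    _ = A (k * τ) := by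
        rw [← ENNReal.ofReal_mul hk0.le, mul_inv_cancel₀ hk0.ne', ENNReal.ofReal_one, one_mul]

theorem young_unbounded (hA : IsYoung A) {v : ℝ≥0∞} (hv : v ≠ ⊤) :
    ∃ τ : ℝ, 0 < τ ∧ v < A τ := by
  obtain ⟨t₁, t₂, ht₁, ht₂, hne⟩ := hA.2.2.2
  set a := min t₁ t₂ with ha
  set b := max t₁ t₂ with hb
  have ha0 : 0 < a := lt_min ht₁ ht₂
  have hab : a ≤ b := min_le_max
  have hAab : A a < A b := by
    rcases lt_or_ge (A t₁) (A t₂) with h | h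
    · rcases le_total t₁ t₂ with hle | hle
      · simpa [ha, hb, min_eq_left hle, max_eq_right hle] using h
      · exact absurd (young_mono hA ht₂.le hle) (not_le.2 h)
    · rcases h.lt_or_eq with h | h
      · rcases le_total t₂ t₁ with hle | hle
        · simpa [ha, hb, min_eq_right hle, max_eq_left hle] using h
        · exact absurd (young_mono hA ht₁.le hle) (not_le.2 h)
      · exact absurd h.symm hne
  rcases eq_or_ne (A b) ⊤ with htop | htop
  · exact ⟨b, lt_of_lt_of_le ha0 hab, htop ▸ hv.lt_top⟩
  have hAa_top : A a ≠ ⊤ := ne_top_of_lt hAab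
  set δ := A b - A a with hδ
  have hδ0 : δ ≠ 0 := by
    rw [hδ]
    exact (tsub_pos_iff_lt.2 hAab).ne'
  have hδtop : δ ≠ ⊤ := by
    rw [hδ]
    exact (tsub_le_self.trans_lt htop.lt_top).ne
  obtain ⟨k, hk⟩ := ENNReal.exists_nat_gt (ENNReal.div_lt_top hv hδ0).ne
  set kk : ℕ := k + 1 with hkk
  have hkkR : (1 : ℝ) ≤ (kk : ℝ) := by exact_mod_cast Nat.one_le_iff_ne_zero.2 (by omega)
  have hkk0 : (0 : ℝ) < kk := lt_of_lt_of_le one_pos hkkR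
  have hvkk : v < ENNReal.ofReal kk * δ := by
    have h1 : v / δ < (kk : ℝ≥0∞) := hk.trans_le (by exact_mod_cast Nat.le_succ k)
    have h2 : v < (kk : ℝ≥0∞) * δ := (ENNReal.div_lt_iff (Or.inl hδ0) (Or.inl hδtop)).1 h1
    rwa [← ENNReal.ofReal_natCast kk] at h2
  set T : ℝ := a + kk * (b - a) with hT
  have hT0 : 0 < T := by nlinarith [ha0, hab]
  have hconv := hA.2.1 T a ((kk : ℝ)⁻¹) hT0.le ha0.le (by positivity)
    (inv_le_one_of_one_le₀ hkkR)
  have harg : (kk : ℝ)⁻¹ * T + (1 - (kk : ℝ)⁻¹) * a = b := by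
    rw [hT]; field_simp; ring
  rw [harg] at hconv
  have hstep : δ ≤ ENNReal.ofReal ((kk : ℝ)⁻¹) * A T := by
    rw [hδ]
    refine tsub_le_iff_right.2 (hconv.trans ?_)
    gcongr
    calc ENNReal.ofReal (1 - (kk : ℝ)⁻¹) * A a ≤ 1 * A a := by
          gcongr
          exact ENNReal.ofReal_le_one.2 (by nlinarith [inv_nonneg.2 hkk0.le])
      _ = A a := one_mul _
  refine ⟨T, hT0, hvkk.trans_le ?_⟩
  calc ENNReal.ofReal kk * δ ≤ ENNReal.ofReal kk * (ENNReal.ofReal ((kk : ℝ)⁻¹) * A T) := by gcongr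
    _ = (ENNReal.ofReal ((kk : ℝ) * (kk : ℝ)⁻¹)) * A T := by
        rw [ENNReal.ofReal_mul hkk0.le, mul_assoc]
    _ = A T := by rw [mul_inv_cancel₀ hkk0.ne', ENNReal.ofReal_one, one_mul]

theorem rcInv_nonneg (A : ℝ → ℝ≥0∞) (v : ℝ≥0∞) : 0 ≤ rcInv A v :=
  Real.sInf_nonneg fun _ hx => hx.1

theorem rcInv_bddBelow (A : ℝ → ℝ≥0∞) (v : ℝ≥0∞) : BddBelow {τ : ℝ | 0 ≤ τ ∧ v < A τ} :=
  ⟨0, fun _ hx => hx.1⟩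

theorem rcInv_set_nonempty (hA : IsYoung A) {v : ℝ≥0∞} (hv : v ≠ ⊤) :
    {τ : ℝ | 0 ≤ τ ∧ v < A τ}.Nonempty := by
  obtain ⟨τ, hτ0, hτ⟩ := young_unbounded hA hv
  exact ⟨τ, hτ0.le, hτ⟩

theorem apply_le_of_lt_rcInv {v : ℝ≥0∞} {τ : ℝ} (hτ : 0 ≤ τ) (h : τ < rcInv A v) :
    A τ ≤ v := by
  by_contra hlt
  exact absurd (csInf_le (rcInv_bddBelow A v) ⟨hτ, not_le.1 hlt⟩) (not_le.2 h)

theorem apply_rcInv_le (hA : IsYoung A) {v : ℝ≥0∞} (hM : 0 < rcInv A v) :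
    A (rcInv A v) ≤ v := by
  set M := rcInv A v with hMdef
  have hcw : ContinuousWithinAt A (Set.Iio M) M :=
    (hA.2.2.1 M hM).mono Iio_subset_Iic_self
  refine le_of_tendsto hcw ?_
  filter_upwards [self_mem_nhdsWithin,
    mem_nhdsWithin_of_mem_nhds (Ioi_mem_nhds hM)] with τ h1 h2
  exact apply_le_of_lt_rcInv (le_of_lt h2) h1

theorem rcInv_mono (hA : IsYoung A) {v w : ℝ≥0∞} (hvw : v ≤ w) (hw : w ≠ ⊤) :
    rcInv A v ≤ rcInv A w := by
  refine csInf_le_csInf (rcInv_bddBelow A v) (rcInv_set_nonempty hA hw) ?_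
  rintro τ ⟨hτ0, hτ⟩
  exact ⟨hτ0, lt_of_le_of_lt hvw hτ⟩

theorem rcInv_mul_le (hA : IsYoung A) {k : ℝ} (hk : 1 ≤ k) {v : ℝ≥0∞} (hv : v ≠ ⊤) :
    rcInv A (ENNReal.ofReal k * v) ≤ k * rcInv A v := by
  have hk0 : (0 : ℝ) < k := lt_of_lt_of_le one_pos hk
  have hsub : (fun τ : ℝ => k * τ) '' {τ : ℝ | 0 ≤ τ ∧ v < A τ} ⊆
      {τ : ℝ | 0 ≤ τ ∧ ENNReal.ofReal k * v < A τ} := by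
    rintro x ⟨τ, ⟨hτ0, hτ⟩, rfl⟩
    refine ⟨by positivity, ?_⟩
    calc ENNReal.ofReal k * v < ENNReal.ofReal k * A τ := by
          refine (ENNReal.mul_lt_mul_iff_right ?_ ?_).2 hτ
          · simpa using hk0
          · exact ENNReal.ofReal_ne_top
      _ ≤ A (k * τ) := young_superscale hA hk hτ0
  calc rcInv A (ENNReal.ofReal k * v)
      ≤ sInf ((fun τ : ℝ => k * τ) '' {τ : ℝ | 0 ≤ τ ∧ v < A τ}) := by
        refine csInf_le_csInf (rcInv_bddBelow A _) ?_ hsub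
        exact (rcInv_set_nonempty hA hv).image _
    _ = k * rcInv A v := by
        rw [rcInv]
        rw [show (fun τ : ℝ => k * τ) '' {τ : ℝ | 0 ≤ τ ∧ v < A τ}
            = k • {τ : ℝ | 0 ≤ τ ∧ v < A τ} from by
          ext x; simp [Set.mem_smul_set, smul_eq_mul]]
        rw [Real.sInf_smul_of_nonneg hk0.le, smul_eq_mul]

/-- The radial kernel used to dominate the integrand of `Jfun`. -/
def Kker (n : ℕ) (s ρ : ℝ) (z : Euc n) : ℝ≥0∞ :=
  ENNReal.ofReal (min ((‖z‖ / ρ) ^ (1 - s)) ((ρ / ‖z‖) ^ s)) /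
    ENNReal.ofReal (‖z‖ ^ (n : ℝ))

theorem euc_nontrivial {n : ℕ} (hn : 0 < n) : Nontrivial (Euc n) := by
  have : NeZero n := ⟨hn.ne'⟩
  infer_instance

theorem euc_ball_vol {n : ℕ} (hn : 0 < n) (x : Euc n) {r : ℝ} (hr : 0 ≤ r) :
    volume (ball x r) = ENNReal.ofReal (r ^ (n : ℝ)) * volume (ball (0 : Euc n) 1) := by
  have := euc_nontrivial hn
  rw [Measure.addHaar_ball _ x hr, finrank_euclideanSpace_fin, ← Real.rpow_natCast r n]

theorem euc_closedBall_vol {n : ℕ} (x : Euc n) {r : ℝ} (hr : 0 ≤ r) :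
    volume (closedBall x r) = ENNReal.ofReal (r ^ (n : ℝ)) * volume (ball (0 : Euc n) 1) := by
  rw [Measure.addHaar_closedBall _ x hr, finrank_euclideanSpace_fin, ← Real.rpow_natCast r n]

theorem Kker_measurable (n : ℕ) {s : ℝ} (hs : 0 < s) (hs1 : s < 1) (ρ : ℝ) :
    Measurable (Kker n s ρ) := by
  apply Measurable.div
  · apply ENNReal.measurable_ofReal.comp
    apply Measurable.min
    · exact (Real.continuous_rpow_const (by linarith)).measurable.comp
        (measurable_norm.div_const ρ)
    · exact (Real.continuous_rpow_const hs.le).measurable.comp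
        (measurable_norm.inv.const_mul ρ)
  · exact ENNReal.measurable_ofReal.comp
      ((Real.continuous_rpow_const (Nat.cast_nonneg n)).measurable.comp measurable_norm)

theorem Kker_zero (n : ℕ) {s : ℝ} (hs : 0 < s) (hs1 : s < 1) (ρ : ℝ) :
    Kker n s ρ 0 = 0 := by
  rw [Kker]
  rw [norm_zero, zero_div, div_zero, Real.zero_rpow (by linarith), Real.zero_rpow hs.ne',
    min_self, ENNReal.ofReal_zero, ENNReal.zero_div]

theorem two_pow_helper (c : ℝ) (k : ℕ) : (((2 : ℝ) ^ k)⁻¹) ^ c = ((2 : ℝ) ^ (-c)) ^ k := by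
  have h2 : (0 : ℝ) ≤ 2 := by norm_num
  calc (((2 : ℝ) ^ k)⁻¹) ^ c = (((2 : ℝ) ^ (k : ℝ))⁻¹) ^ c := by rw [Real.rpow_natCast]
    _ = ((2 : ℝ) ^ (-(k : ℝ))) ^ c := by rw [Real.rpow_neg h2]
    _ = (2 : ℝ) ^ (-(k : ℝ) * c) := by rw [← Real.rpow_mul h2]
    _ = (2 : ℝ) ^ (-c * (k : ℝ)) := by ring_nf
    _ = ((2 : ℝ) ^ (-c)) ^ (k : ℝ) := by rw [← Real.rpow_mul h2]
    _ = ((2 : ℝ) ^ (-c)) ^ k := Real.rpow_natCast _ k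

theorem ennreal_shuffle (a E D ω : ℝ≥0∞) (hD0 : D ≠ 0) (hDt : D ≠ ⊤) :
    a / D * (E * D * ω) = a * E * ω := by
  rw [div_eq_mul_inv]
  calc a * D⁻¹ * (E * D * ω) = a * E * ω * (D⁻¹ * D) := by ring
    _ = a * E * ω := by rw [ENNReal.inv_mul_cancel hD0 hDt, mul_one]

/-- The geometric-series constant bounding `∫ Kker`. -/
def geomC (n : ℕ) (s : ℝ) : ℝ≥0∞ :=
  ENNReal.ofReal ((2 : ℝ) ^ (n : ℝ)) * volume (ball (0 : Euc n) 1) *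
    (1 - ENNReal.ofReal ((2 : ℝ) ^ (s - 1)))⁻¹ +
  ENNReal.ofReal ((2 : ℝ) ^ (n : ℝ)) * volume (ball (0 : Euc n) 1) *
    (1 - ENNReal.ofReal ((2 : ℝ) ^ (-s)))⁻¹

theorem geomC_lt_top (n : ℕ) {s : ℝ} (hs : 0 < s) (hs1 : s < 1) : geomC n s < ⊤ := by
  have hq1 : ENNReal.ofReal ((2 : ℝ) ^ (s - 1)) < 1 := by
    rw [← ENNReal.ofReal_one]
    exact ENNReal.ofReal_lt_ofReal_iff_of_nonneg (by positivity) |>.2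
      (Real.rpow_lt_one_of_one_lt_of_neg one_lt_two (by linarith))
  have hq2 : ENNReal.ofReal ((2 : ℝ) ^ (-s)) < 1 := by
    rw [← ENNReal.ofReal_one]
    exact ENNReal.ofReal_lt_ofReal_iff_of_nonneg (by positivity) |>.2
      (Real.rpow_lt_one_of_one_lt_of_neg one_lt_two (by linarith))
  have h1 : (1 - ENNReal.ofReal ((2 : ℝ) ^ (s - 1)))⁻¹ < ⊤ :=
    ENNReal.inv_lt_top.2 (tsub_pos_iff_lt.2 hq1)
  have h2 : (1 - ENNReal.ofReal ((2 : ℝ) ^ (-s)))⁻¹ < ⊤ :=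
    ENNReal.inv_lt_top.2 (tsub_pos_iff_lt.2 hq2)
  have hb : volume (ball (0 : Euc n) 1) < ⊤ := measure_ball_lt_top
  rw [geomC]
  exact ENNReal.add_lt_top.2
    ⟨ENNReal.mul_lt_top (ENNReal.mul_lt_top ENNReal.ofReal_lt_top hb) h1,
     ENNReal.mul_lt_top (ENNReal.mul_lt_top ENNReal.ofReal_lt_top hb) h2⟩

theorem Kker_lintegral_le {n : ℕ} (hn : 0 < n) {s : ℝ} (hs : 0 < s) (hs1 : s < 1)
    {ρ : ℝ} (hρ : 0 < ρ) : ∫⁻ z, Kker n s ρ z ≤ geomC n s := by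
  set ω := volume (ball (0 : Euc n) 1) with hω
  have hωtop : ω ≠ ⊤ := measure_ball_lt_top.ne
  have hn0 : (0 : ℝ) ≤ (n : ℝ) := Nat.cast_nonneg n
  -- exists dyadic index
  have hdyadic : ∀ x : ℝ, 1 ≤ x → ∃ k : ℕ, (2 : ℝ) ^ k ≤ x ∧ x < (2 : ℝ) ^ (k + 1) := by
    intro x hx
    have hfl : 1 ≤ ⌊x⌋₊ := Nat.le_floor (by exact_mod_cast hx)
    refine ⟨Nat.log 2 ⌊x⌋₊, ?_, ?_⟩
    · calc ((2 : ℝ) ^ Nat.log 2 ⌊x⌋₊) = ((2 ^ Nat.log 2 ⌊x⌋₊ : ℕ) : ℝ) := by push_cast; ring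
        _ ≤ (⌊x⌋₊ : ℝ) := by exact_mod_cast Nat.pow_log_le_self 2 (by omega)
        _ ≤ x := Nat.floor_le (by linarith)
    · calc x < ⌊x⌋₊ + 1 := Nat.lt_floor_add_one x
        _ ≤ ((2 ^ (Nat.log 2 ⌊x⌋₊ + 1) : ℕ) : ℝ) := by
            exact_mod_cast Nat.succ_le_of_lt (Nat.lt_pow_succ_log_self one_lt_two ⌊x⌋₊)
        _ = (2 : ℝ) ^ (Nat.log 2 ⌊x⌋₊ + 1) := by push_cast; ring
  -- outer part
  have houter : ∫⁻ z in (ball (0 : Euc n) ρ)ᶜ, Kker n s ρ z ≤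
      ENNReal.ofReal ((2 : ℝ) ^ (n : ℝ)) * ω * (1 - ENNReal.ofReal ((2 : ℝ) ^ (-s)))⁻¹ := by
    set S : ℕ → Set (Euc n) := fun k =>
      ball (0 : Euc n) ((2 : ℝ) ^ (k + 1) * ρ) \ ball (0 : Euc n) ((2 : ℝ) ^ k * ρ) with hS
    have hsub : (ball (0 : Euc n) ρ)ᶜ ⊆ ⋃ k, S k := by
      intro z hz
      have hzρ : ρ ≤ ‖z‖ := by
        simpa [mem_ball, dist_zero_right, not_lt] using hz
      have hz0 : 0 < ‖z‖ := hρ.trans_le hzρ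
      obtain ⟨k, h1, h2⟩ := hdyadic (‖z‖ / ρ) ((one_le_div hρ).2 hzρ)
      refine mem_iUnion.2 ⟨k, ?_, ?_⟩
      · rw [mem_ball, dist_zero_right]
        calc ‖z‖ = ‖z‖ / ρ * ρ := by field_simp
          _ < (2 : ℝ) ^ (k + 1) * ρ := by
              exact mul_lt_mul_of_pos_right h2 hρ
      · rw [mem_ball, dist_zero_right, not_lt]
        calc (2 : ℝ) ^ k * ρ ≤ ‖z‖ / ρ * ρ := mul_le_mul_of_nonneg_right h1 hρ.le
          _ = ‖z‖ := by field_simp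
    have hshell : ∀ k : ℕ, ∫⁻ z in S k, Kker n s ρ z ≤
        (ENNReal.ofReal ((2 : ℝ) ^ (-s))) ^ k * (ENNReal.ofReal ((2 : ℝ) ^ (n : ℝ)) * ω) := by
      intro k
      have hrk : (0 : ℝ) < (2 : ℝ) ^ k * ρ := by positivity
      set D : ℝ≥0∞ := ENNReal.ofReal (((2 : ℝ) ^ k * ρ) ^ (n : ℝ)) with hD
      have hD0 : D ≠ 0 := (ENNReal.ofReal_pos.2 (by positivity)).ne'
      have hDt : D ≠ ⊤ := ENNReal.ofReal_ne_top
      have hptwise : ∀ z ∈ S k, Kker n s ρ z ≤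
          ENNReal.ofReal (((2 : ℝ) ^ (-s)) ^ k) / D := by
        intro z hz
        obtain ⟨hz1, hz2⟩ := hz
        rw [mem_ball, dist_zero_right] at hz1
        rw [mem_ball, dist_zero_right, not_lt] at hz2
        have hz0 : 0 < ‖z‖ := hrk.trans_le hz2
        refine ENNReal.div_le_div (ENNReal.ofReal_le_ofReal ?_) (ENNReal.ofReal_le_ofReal ?_)
        · calc min ((‖z‖ / ρ) ^ (1 - s)) ((ρ / ‖z‖) ^ s) ≤ (ρ / ‖z‖) ^ s := min_le_right _ _
            _ ≤ (((2 : ℝ) ^ k)⁻¹) ^ s := by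
                apply Real.rpow_le_rpow (by positivity) _ hs.le
                calc ρ / ‖z‖ ≤ ρ / ((2 : ℝ) ^ k * ρ) :=
                      div_le_div_of_nonneg_left hρ.le hrk hz2
                  _ = ((2 : ℝ) ^ k)⁻¹ := by field_simp
            _ = ((2 : ℝ) ^ (-s)) ^ k := two_pow_helper s k
        · exact Real.rpow_le_rpow hrk.le hz2 hn0
      calc ∫⁻ z in S k, Kker n s ρ z
          ≤ ∫⁻ _ in S k, ENNReal.ofReal (((2 : ℝ) ^ (-s)) ^ k) / D :=
            setLIntegral_mono measurable_const hptwise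
        _ = ENNReal.ofReal (((2 : ℝ) ^ (-s)) ^ k) / D * volume (S k) := setLIntegral_const _ _
        _ ≤ ENNReal.ofReal (((2 : ℝ) ^ (-s)) ^ k) / D *
            (ENNReal.ofReal ((2 : ℝ) ^ (n : ℝ)) * D * ω) := by
            gcongr
            calc volume (S k) ≤ volume (ball (0 : Euc n) ((2 : ℝ) ^ (k + 1) * ρ)) :=
                  measure_mono diff_subset
              _ = ENNReal.ofReal (((2 : ℝ) ^ (k + 1) * ρ) ^ (n : ℝ)) * ω :=
                  euc_ball_vol hn _ (by positivity)
              _ = ENNReal.ofReal ((2 : ℝ) ^ (n : ℝ)) * D * ω := by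
                  rw [hD, ← ENNReal.ofReal_mul (by positivity), ← Real.mul_rpow (by norm_num)
                    (by positivity)]
                  congr 3
                  ring
        _ = ENNReal.ofReal (((2 : ℝ) ^ (-s)) ^ k) * ENNReal.ofReal ((2 : ℝ) ^ (n : ℝ)) * ω :=
            ennreal_shuffle _ _ _ _ hD0 hDt
        _ = (ENNReal.ofReal ((2 : ℝ) ^ (-s))) ^ k * (ENNReal.ofReal ((2 : ℝ) ^ (n : ℝ)) * ω) := by
            rw [ENNReal.ofReal_pow (by positivity), mul_assoc]
    calc ∫⁻ z in (ball (0 : Euc n) ρ)ᶜ, Kker n s ρ z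
        ≤ ∫⁻ z in ⋃ k, S k, Kker n s ρ z := lintegral_mono_set hsub
      _ ≤ ∑' k, ∫⁻ z in S k, Kker n s ρ z := lintegral_iUnion_le _ _
      _ ≤ ∑' k, (ENNReal.ofReal ((2 : ℝ) ^ (-s))) ^ k *
            (ENNReal.ofReal ((2 : ℝ) ^ (n : ℝ)) * ω) := ENNReal.tsum_le_tsum hshell
      _ = (1 - ENNReal.ofReal ((2 : ℝ) ^ (-s)))⁻¹ *
            (ENNReal.ofReal ((2 : ℝ) ^ (n : ℝ)) * ω) := by
          rw [ENNReal.tsum_mul_right, ENNReal.tsum_geometric]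
      _ = ENNReal.ofReal ((2 : ℝ) ^ (n : ℝ)) * ω * (1 - ENNReal.ofReal ((2 : ℝ) ^ (-s)))⁻¹ := by
          ring
  -- inner part
  have hinner : ∫⁻ z in ball (0 : Euc n) ρ, Kker n s ρ z ≤
      ENNReal.ofReal ((2 : ℝ) ^ (n : ℝ)) * ω * (1 - ENNReal.ofReal ((2 : ℝ) ^ (s - 1)))⁻¹ := by
    set S : ℕ → Set (Euc n) := fun k =>
      closedBall (0 : Euc n) (((2 : ℝ) ^ k)⁻¹ * ρ) \
        closedBall (0 : Euc n) (((2 : ℝ) ^ (k + 1))⁻¹ * ρ) with hS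
    have hsub : ball (0 : Euc n) ρ ⊆ (⋃ k, S k) ∪ {0} := by
      intro z hz
      rw [mem_ball, dist_zero_right] at hz
      rcases eq_or_ne z 0 with rfl | hz0
      · exact Or.inr rfl
      have hzpos : 0 < ‖z‖ := norm_pos_iff.2 hz0
      obtain ⟨k, h1, h2⟩ := hdyadic (ρ / ‖z‖) (by
        rw [le_div_iff₀ hzpos]; linarith)
      refine Or.inl (mem_iUnion.2 ⟨k, ?_, ?_⟩)
      · rw [mem_closedBall, dist_zero_right]
        rw [le_div_iff₀ hzpos] at h1
        calc ‖z‖ = ((2 : ℝ) ^ k)⁻¹ * ((2 : ℝ) ^ k * ‖z‖) := by field_simp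
          _ ≤ ((2 : ℝ) ^ k)⁻¹ * ρ := by
              apply mul_le_mul_of_nonneg_left _ (by positivity)
              linarith [h1]
      · rw [mem_closedBall, dist_zero_right, not_le]
        rw [div_lt_iff₀ hzpos] at h2
        calc ((2 : ℝ) ^ (k + 1))⁻¹ * ρ < ((2 : ℝ) ^ (k + 1))⁻¹ * ((2 : ℝ) ^ (k + 1) * ‖z‖) := by
              apply mul_lt_mul_of_pos_left h2 (by positivity)
          _ = ‖z‖ := by field_simp
    have hshell : ∀ k : ℕ, ∫⁻ z in S k, Kker n s ρ z ≤
        (ENNReal.ofReal ((2 : ℝ) ^ (s - 1))) ^ k * (ENNReal.ofReal ((2 : ℝ) ^ (n : ℝ)) * ω) := by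
      intro k
      have hrk : (0 : ℝ) < ((2 : ℝ) ^ (k + 1))⁻¹ * ρ := by positivity
      set D : ℝ≥0∞ := ENNReal.ofReal ((((2 : ℝ) ^ (k + 1))⁻¹ * ρ) ^ (n : ℝ)) with hD
      have hD0 : D ≠ 0 := (ENNReal.ofReal_pos.2 (by positivity)).ne'
      have hDt : D ≠ ⊤ := ENNReal.ofReal_ne_top
      have hptwise : ∀ z ∈ S k, Kker n s ρ z ≤
          ENNReal.ofReal (((2 : ℝ) ^ (s - 1)) ^ k) / D := by
        intro z hz
        obtain ⟨hz1, hz2⟩ := hz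
        rw [mem_closedBall, dist_zero_right] at hz1
        rw [mem_closedBall, dist_zero_right, not_le] at hz2
        have hz0 : 0 < ‖z‖ := hrk.trans hz2
        refine ENNReal.div_le_div (ENNReal.ofReal_le_ofReal ?_) (ENNReal.ofReal_le_ofReal ?_)
        · calc min ((‖z‖ / ρ) ^ (1 - s)) ((ρ / ‖z‖) ^ s) ≤ (‖z‖ / ρ) ^ (1 - s) := min_le_left _ _
            _ ≤ (((2 : ℝ) ^ k)⁻¹) ^ (1 - s) := by
                apply Real.rpow_le_rpow (by positivity) _ (by linarith)
                rw [div_le_iff₀ hρ]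
                linarith [hz1]
            _ = ((2 : ℝ) ^ (-(1 - s))) ^ k := two_pow_helper (1 - s) k
            _ = ((2 : ℝ) ^ (s - 1)) ^ k := by rw [neg_sub]
        · exact Real.rpow_le_rpow hrk.le hz2.le hn0
      calc ∫⁻ z in S k, Kker n s ρ z
          ≤ ∫⁻ _ in S k, ENNReal.ofReal (((2 : ℝ) ^ (s - 1)) ^ k) / D :=
            setLIntegral_mono measurable_const hptwise
        _ = ENNReal.ofReal (((2 : ℝ) ^ (s - 1)) ^ k) / D * volume (S k) := setLIntegral_const _ _
        _ ≤ ENNReal.ofReal (((2 : ℝ) ^ (s - 1)) ^ k) / D *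
            (ENNReal.ofReal ((2 : ℝ) ^ (n : ℝ)) * D * ω) := by
            gcongr
            calc volume (S k) ≤ volume (closedBall (0 : Euc n) (((2 : ℝ) ^ k)⁻¹ * ρ)) :=
                  measure_mono diff_subset
              _ = ENNReal.ofReal ((((2 : ℝ) ^ k)⁻¹ * ρ) ^ (n : ℝ)) * ω :=
                  euc_closedBall_vol _ (by positivity)
              _ = ENNReal.ofReal ((2 : ℝ) ^ (n : ℝ)) * D * ω := by
                  rw [hD, ← ENNReal.ofReal_mul (by positivity), ← Real.mul_rpow (by norm_num)
                    (by positivity)]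
                  congr 3
                  field_simp
                  ring
        _ = ENNReal.ofReal (((2 : ℝ) ^ (s - 1)) ^ k) * ENNReal.ofReal ((2 : ℝ) ^ (n : ℝ)) * ω :=
            ennreal_shuffle _ _ _ _ hD0 hDt
        _ = (ENNReal.ofReal ((2 : ℝ) ^ (s - 1))) ^ k *
              (ENNReal.ofReal ((2 : ℝ) ^ (n : ℝ)) * ω) := by
            rw [ENNReal.ofReal_pow (by positivity), mul_assoc]
    calc ∫⁻ z in ball (0 : Euc n) ρ, Kker n s ρ z
        ≤ ∫⁻ z in (⋃ k, S k) ∪ {0}, Kker n s ρ z := lintegral_mono_set hsub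
      _ ≤ (∫⁻ z in ⋃ k, S k, Kker n s ρ z) + ∫⁻ z in {0}, Kker n s ρ z :=
          lintegral_union_le _ _ _
      _ ≤ (∑' k, ∫⁻ z in S k, Kker n s ρ z) + Kker n s ρ 0 * volume ({0} : Set (Euc n)) := by
          gcongr
          · exact lintegral_iUnion_le _ _
          · exact (lintegral_singleton _ _).le
      _ = ∑' k, ∫⁻ z in S k, Kker n s ρ z := by
          rw [Kker_zero n hs hs1 ρ, zero_mul, add_zero]
      _ ≤ ∑' k, (ENNReal.ofReal ((2 : ℝ) ^ (s - 1))) ^ k *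
            (ENNReal.ofReal ((2 : ℝ) ^ (n : ℝ)) * ω) := ENNReal.tsum_le_tsum hshell
      _ = (1 - ENNReal.ofReal ((2 : ℝ) ^ (s - 1)))⁻¹ *
            (ENNReal.ofReal ((2 : ℝ) ^ (n : ℝ)) * ω) := by
          rw [ENNReal.tsum_mul_right, ENNReal.tsum_geometric]
      _ = ENNReal.ofReal ((2 : ℝ) ^ (n : ℝ)) * ω * (1 - ENNReal.ofReal ((2 : ℝ) ^ (s - 1)))⁻¹ := by
          ring
  calc ∫⁻ z, Kker n s ρ z
      = (∫⁻ z in ball (0 : Euc n) ρ, Kker n s ρ z) +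
        ∫⁻ z in (ball (0 : Euc n) ρ)ᶜ, Kker n s ρ z :=
        (lintegral_add_compl _ measurableSet_ball).symm
    _ ≤ _ := add_le_add hinner houter

theorem indicator_one_ne_top {α : Type*} (B : Set α) (w : α) :
    B.indicator (fun _ => (1 : ℝ≥0∞)) w ≠ ⊤ := by
  by_cases h : w ∈ B <;> simp [h]

theorem J_le {n : ℕ} (hn : 0 < n) {s : ℝ} (hs : 0 < s) (hs1 : s < 1)
    {A : ℝ → ℝ≥0∞} (hA : IsYoung A) {ρ M θ : ℝ} (hρ : 0 < ρ) (hM : 0 < M)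
    (hAM : A M ≤ ENNReal.ofReal (ρ ^ (-(n : ℝ))))
    (hθ0 : 0 < θ) (hθ1 : θ ≤ 1) {lam : ℝ} (hlam : lam = ρ ^ (1 - s) / θ) :
    Jfun n s A (fun x (_ : Fin 1) => (M * max (ρ - ‖x‖) 0) / lam) ≤
      ENNReal.ofReal θ * (2 * (geomC n s * volume (ball (0 : Euc n) 1))) := by
  have hρs : (0 : ℝ) < ρ ^ (1 - s) := Real.rpow_pos_of_pos hρ _
  have hlam0 : 0 < lam := by rw [hlam]; positivity
  set u : Euc n → ℝ := fun x => M * max (ρ - ‖x‖) 0 with hu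
  set B : Set (Euc n) := ball (0 : Euc n) ρ with hB
  set v : ℝ≥0∞ := ENNReal.ofReal (ρ ^ (-(n : ℝ))) with hv
  set cst : ℝ≥0∞ := ENNReal.ofReal θ * v with hcst
  have hcst_top : cst ≠ ⊤ := ENNReal.mul_ne_top ENNReal.ofReal_ne_top ENNReal.ofReal_ne_top
  set ω := volume (ball (0 : Euc n) 1) with hω
  have hKm : Measurable (Kker n s ρ) := Kker_measurable n hs hs1 ρ
  -- numerator simplification
  have hnum : ∀ x y : Euc n,
      Real.sqrt (∑ i : Fin 1, (u x / lam - u y / lam) ^ 2) = |u x - u y| / lam := by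
    intro x y
    rw [Fin.sum_univ_one, Real.sqrt_sq_eq_abs, ← sub_div, abs_div, abs_of_pos hlam0]
  -- pointwise bound
  have hpt : ∀ x y : Euc n,
      A (Real.sqrt (∑ i : Fin 1, (u x / lam - u y / lam) ^ 2) / ‖x - y‖ ^ s) /
        ENNReal.ofReal (‖x - y‖ ^ (n : ℝ)) ≤
      (B.indicator (fun _ => (1 : ℝ≥0∞)) x + B.indicator (fun _ => 1) y) *
        (cst * Kker n s ρ (x - y)) := by
    intro x y
    rw [hnum x y]
    by_cases hxy : x ∈ B ∨ y ∈ B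
    · -- at least one point in the ball
      have hcoef : 1 ≤ B.indicator (fun _ => (1 : ℝ≥0∞)) x + B.indicator (fun _ => 1) y := by
        rcases hxy with h | h
        · rw [Set.indicator_of_mem h]; exact le_add_of_le_left le_rfl
        · rw [Set.indicator_of_mem h]; exact le_add_of_le_right le_rfl
      have core : A (|u x - u y| / lam / ‖x - y‖ ^ s) / ENNReal.ofReal (‖x - y‖ ^ (n : ℝ)) ≤
          cst * Kker n s ρ (x - y) := by
        rcases eq_or_ne x y with rfl | hne
        · simp only [sub_self, abs_zero, zero_div, hA.1, ENNReal.zero_div]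
          exact zero_le
        · have hd0 : 0 < ‖x - y‖ := by
            rw [norm_pos_iff, sub_ne_zero]; exact hne
          set d : ℝ := ‖x - y‖ with hd
          -- Lipschitz and sup bounds on the difference
          have hΔd : |u x - u y| ≤ M * d := by
            show |M * max (ρ - ‖x‖) 0 - M * max (ρ - ‖y‖) 0| ≤ M * d
            calc |M * max (ρ - ‖x‖) 0 - M * max (ρ - ‖y‖) 0|
                = M * |max (ρ - ‖x‖) 0 - max (ρ - ‖y‖) 0| := by
                  rw [← mul_sub, abs_mul, abs_of_pos hM]
              _ ≤ M * |(ρ - ‖x‖) - (ρ - ‖y‖)| :=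
                  mul_le_mul_of_nonneg_left (abs_max_sub_max_le_abs _ _ _) hM.le
              _ ≤ M * d := by
                  refine mul_le_mul_of_nonneg_left ?_ hM.le
                  rw [show (ρ - ‖x‖) - (ρ - ‖y‖) = ‖y‖ - ‖x‖ by ring, abs_sub_comm]
                  exact abs_norm_sub_norm_le x y
          have hbnd : ∀ w : Euc n, 0 ≤ u w ∧ u w ≤ M * ρ := by
            intro w
            constructor
            · show (0 : ℝ) ≤ M * max (ρ - ‖w‖) 0
              positivity
            · show M * max (ρ - ‖w‖) 0 ≤ M * ρ
              have hmx : max (ρ - ‖w‖) 0 ≤ ρ := max_le (by linarith [norm_nonneg w]) hρ.le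
              nlinarith
          have hΔρ : |u x - u y| ≤ M * ρ := by
            have hx' := hbnd x
            have hy' := hbnd y
            rw [abs_le]
            constructor <;> [skip; skip] <;>
              [linarith [hx'.1, hx'.2, hy'.1, hy'.2]; linarith [hx'.1, hx'.2, hy'.1, hy'.2]]
          -- rpow identities
          have f1 : (d / ρ) ^ (1 - s) * ρ ^ (1 - s) = d ^ (1 - s) := by
            rw [← Real.mul_rpow (by positivity) hρ.le, div_mul_cancel₀ _ hρ.ne']
          have f2 : d ^ (1 - s) * d ^ s = d := by
            rw [← Real.rpow_add hd0, show (1 - s) + s = 1 by ring, Real.rpow_one]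
          have g1 : (ρ / d) ^ s * d ^ s = ρ ^ s := by
            rw [← Real.mul_rpow (by positivity) hd0.le, div_mul_cancel₀ _ hd0.ne']
          have g2 : ρ ^ s * ρ ^ (1 - s) = ρ := by
            rw [← Real.rpow_add hρ, show s + (1 - s) = 1 by ring, Real.rpow_one]
          have hds : (0 : ℝ) < d ^ s := Real.rpow_pos_of_pos hd0 _
          set md : ℝ := min ((d / ρ) ^ (1 - s)) ((ρ / d) ^ s) with hmd
          have hmd0 : 0 ≤ md := le_min (by positivity) (by positivity)
          have hmd1 : md ≤ 1 := by
            rcases le_total d ρ with h | h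
            · refine (min_le_left _ _).trans ?_
              exact Real.rpow_le_one (by positivity) ((div_le_one hρ).2 h) (by linarith)
            · refine (min_le_right _ _).trans ?_
              exact Real.rpow_le_one (by positivity) ((div_le_one hd0).2 h) hs.le
          -- the key bound on the argument of A
          have harg : |u x - u y| / lam / d ^ s ≤ θ * md * M := by
            rw [div_div, div_le_iff₀ (by positivity)]
            rcases min_cases ((d / ρ) ^ (1 - s)) ((ρ / d) ^ s) with ⟨hEq, _⟩ | ⟨hEq, _⟩ <;>
              rw [hmd, hEq, hlam]
            · have hR : θ * ((d / ρ) ^ (1 - s)) * M * (ρ ^ (1 - s) / θ * d ^ s) = M * d := by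
                have h3 : (d / ρ) ^ (1 - s) * ρ ^ (1 - s) * d ^ s = d := by rw [f1, f2]
                calc θ * ((d / ρ) ^ (1 - s)) * M * (ρ ^ (1 - s) / θ * d ^ s)
                    = M * ((d / ρ) ^ (1 - s) * ρ ^ (1 - s) * d ^ s) * (θ / θ) := by ring
                  _ = M * d := by rw [div_self hθ0.ne', mul_one, h3]
              rw [hR]; exact hΔd
            · have hR : θ * ((ρ / d) ^ s) * M * (ρ ^ (1 - s) / θ * d ^ s) = M * ρ := by
                have h3 : (ρ / d) ^ s * d ^ s * ρ ^ (1 - s) = ρ := by rw [g1, g2]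
                calc θ * ((ρ / d) ^ s) * M * (ρ ^ (1 - s) / θ * d ^ s)
                    = M * ((ρ / d) ^ s * d ^ s * ρ ^ (1 - s)) * (θ / θ) := by ring
                  _ = M * ρ := by rw [div_self hθ0.ne', mul_one, h3]
              rw [hR]; exact hΔρ
          -- chain through the Young function
          have hAarg : A (|u x - u y| / lam / d ^ s) ≤
              ENNReal.ofReal θ * ENNReal.ofReal md * v := by
            have h0 : 0 ≤ |u x - u y| / lam / d ^ s := by positivity
            refine (young_mono hA h0 harg).trans ?_
            have hsc := young_scale hA (t := θ * md) (M := M) (by positivity)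
              (by nlinarith) hM.le
            refine hsc.trans ?_
            rw [ENNReal.ofReal_mul hθ0.le]
            exact mul_le_mul_right hAM _
          calc A (|u x - u y| / lam / d ^ s) / ENNReal.ofReal (d ^ (n : ℝ))
              ≤ ENNReal.ofReal θ * ENNReal.ofReal md * v / ENNReal.ofReal (d ^ (n : ℝ)) :=
                ENNReal.div_le_div hAarg le_rfl
            _ = cst * Kker n s ρ (x - y) := by
                rw [hcst, Kker]
                rw [div_eq_mul_inv, div_eq_mul_inv]
                ring
      refine core.trans ?_
      calc cst * Kker n s ρ (x - y) = 1 * (cst * Kker n s ρ (x - y)) := (one_mul _).symm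
        _ ≤ _ := mul_le_mul_left hcoef _
    · -- both points outside the ball: the integrand vanishes
      push_neg at hxy
      have hux : u x = 0 := by
        have hge : ρ ≤ ‖x‖ := by
          have := hxy.1; rw [hB, mem_ball, dist_zero_right, not_lt] at this; exact this
        show M * max (ρ - ‖x‖) 0 = 0
        rw [max_eq_right (by linarith), mul_zero]
      have huy : u y = 0 := by
        have hge : ρ ≤ ‖y‖ := by
          have := hxy.2; rw [hB, mem_ball, dist_zero_right, not_lt] at this; exact this
        show M * max (ρ - ‖y‖) 0 = 0
        rw [max_eq_right (by linarith), mul_zero]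
      rw [hux, huy]
      simp only [sub_self, abs_zero, zero_div, hA.1, ENNReal.zero_div]
      exact zero_le
  -- translation invariance
  have htransL : ∀ x : Euc n, ∫⁻ y, Kker n s ρ (x - y) = ∫⁻ z, Kker n s ρ z := by
    intro x
    have hm : Measurable fun y : Euc n => Kker n s ρ (x + y) :=
      hKm.comp (measurable_const.add measurable_id)
    calc ∫⁻ y, Kker n s ρ (x - y) = ∫⁻ y, (fun w => Kker n s ρ (x + w)) (-y) := by
          simp only [sub_eq_add_neg]
      _ = ∫⁻ y, Kker n s ρ (x + y) :=
          (Measure.measurePreserving_neg (volume : Measure (Euc n))).lintegral_comp hm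
      _ = ∫⁻ z, Kker n s ρ z := lintegral_add_left_eq_self _ x
  have htransR : ∀ y : Euc n, ∫⁻ x, Kker n s ρ (x - y) = ∫⁻ z, Kker n s ρ z := by
    intro y
    calc ∫⁻ x, Kker n s ρ (x - y) = ∫⁻ x, (fun w => Kker n s ρ w) (x + -y) := by
          simp only [sub_eq_add_neg]
      _ = ∫⁻ z, Kker n s ρ z := lintegral_add_right_eq_self _ (-y)
  set IK : ℝ≥0∞ := ∫⁻ z, Kker n s ρ z with hIK
  -- the double integral of the majorant
  have hmaj : ∫⁻ x : Euc n, ∫⁻ y : Euc n,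
      (B.indicator (fun _ => (1 : ℝ≥0∞)) x + B.indicator (fun _ => 1) y) *
        (cst * Kker n s ρ (x - y)) = 2 * (cst * IK * volume B) := by
    have hindint : ∀ c : ℝ≥0∞, ∫⁻ w : Euc n, B.indicator (fun _ => (1 : ℝ≥0∞)) w * c
        = c * volume B := by
      intro c
      rw [show (fun w : Euc n => B.indicator (fun _ => (1 : ℝ≥0∞)) w * c)
          = B.indicator (fun _ => c) from funext fun w => by
        by_cases h : w ∈ B <;> simp [h]]
      rw [lintegral_indicator measurableSet_ball, setLIntegral_const]
    have hterm1 : ∀ x : Euc n, ∫⁻ y, B.indicator (fun _ => (1 : ℝ≥0∞)) x *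
        (cst * Kker n s ρ (x - y)) = B.indicator (fun _ => (1 : ℝ≥0∞)) x * (cst * IK) := by
      intro x
      rw [lintegral_const_mul' _ _ (indicator_one_ne_top B x),
        lintegral_const_mul' _ _ hcst_top, htransL x]
    have hterm2m : Measurable (Function.uncurry fun x y : Euc n =>
        B.indicator (fun _ => (1 : ℝ≥0∞)) y * (cst * Kker n s ρ (x - y))) := by
      apply Measurable.mul
      · exact (measurable_const.indicator measurableSet_ball).comp measurable_snd
      · exact measurable_const.mul (hKm.comp (measurable_fst.sub measurable_snd))
    have hsplit : ∀ x : Euc n, ∫⁻ y : Euc n,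
        (B.indicator (fun _ => (1 : ℝ≥0∞)) x + B.indicator (fun _ => 1) y) *
          (cst * Kker n s ρ (x - y)) =
        (∫⁻ y, B.indicator (fun _ => (1 : ℝ≥0∞)) x * (cst * Kker n s ρ (x - y))) +
        ∫⁻ y, B.indicator (fun _ => (1 : ℝ≥0∞)) y * (cst * Kker n s ρ (x - y)) := by
      intro x
      rw [← lintegral_add_left]
      · apply lintegral_congr
        intro y
        rw [add_mul]
      · exact measurable_const.mul (measurable_const.mul
          (hKm.comp (measurable_const.sub measurable_id)))
    calc ∫⁻ x : Euc n, ∫⁻ y : Euc n,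
        (B.indicator (fun _ => (1 : ℝ≥0∞)) x + B.indicator (fun _ => 1) y) *
          (cst * Kker n s ρ (x - y))
        = ∫⁻ x : Euc n, ((∫⁻ y, B.indicator (fun _ => (1 : ℝ≥0∞)) x *
            (cst * Kker n s ρ (x - y))) +
          ∫⁻ y, B.indicator (fun _ => (1 : ℝ≥0∞)) y * (cst * Kker n s ρ (x - y))) :=
          lintegral_congr hsplit
      _ = (∫⁻ x : Euc n, ∫⁻ y, B.indicator (fun _ => (1 : ℝ≥0∞)) x *
            (cst * Kker n s ρ (x - y))) +
          ∫⁻ x : Euc n, ∫⁻ y, B.indicator (fun _ => (1 : ℝ≥0∞)) y *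
            (cst * Kker n s ρ (x - y)) := by
          apply lintegral_add_left
          apply Measurable.lintegral_prod_right
          apply Measurable.mul
          · exact (measurable_const.indicator measurableSet_ball).comp measurable_fst
          · exact measurable_const.mul (hKm.comp (measurable_fst.sub measurable_snd))
      _ = (cst * IK * volume B) + (cst * IK * volume B) := by
          congr 1
          · rw [lintegral_congr hterm1, hindint]
          · rw [lintegral_lintegral_swap hterm2m.aemeasurable]
            have : ∀ y : Euc n, ∫⁻ x, B.indicator (fun _ => (1 : ℝ≥0∞)) y *
                (cst * Kker n s ρ (x - y)) = B.indicator (fun _ => (1 : ℝ≥0∞)) y *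
                (cst * IK) := by
              intro y
              rw [lintegral_const_mul' _ _ (indicator_one_ne_top B y),
                lintegral_const_mul' _ _ hcst_top, htransR y]
            rw [lintegral_congr this, hindint]
      _ = 2 * (cst * IK * volume B) := (two_mul _).symm
  -- assemble
  have hvol : volume B = ENNReal.ofReal (ρ ^ (n : ℝ)) * ω := euc_ball_vol hn _ hρ.le
  have hcancel : v * ENNReal.ofReal (ρ ^ (n : ℝ)) = 1 := by
    rw [hv, ← ENNReal.ofReal_mul (by positivity), ← Real.rpow_add hρ, neg_add_cancel,
      Real.rpow_zero, ENNReal.ofReal_one]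
  calc Jfun n s A (fun x (_ : Fin 1) => (M * max (ρ - ‖x‖) 0) / lam)
      = ∫⁻ x : Euc n, ∫⁻ y : Euc n,
          A (Real.sqrt (∑ i : Fin 1, (u x / lam - u y / lam) ^ 2) / ‖x - y‖ ^ s) /
            ENNReal.ofReal (‖x - y‖ ^ (n : ℝ)) := rfl
    _ ≤ ∫⁻ x : Euc n, ∫⁻ y : Euc n,
          (B.indicator (fun _ => (1 : ℝ≥0∞)) x + B.indicator (fun _ => 1) y) *
            (cst * Kker n s ρ (x - y)) :=
        lintegral_mono fun x => lintegral_mono fun y => hpt x y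
    _ = 2 * (cst * IK * volume B) := hmaj
    _ ≤ 2 * (cst * geomC n s * volume B) := by
        gcongr
        exact Kker_lintegral_le hn hs hs1 hρ
    _ = ENNReal.ofReal θ * (2 * (geomC n s * ω)) * (v * ENNReal.ofReal (ρ ^ (n : ℝ))) := by
        rw [hvol, hcst]; ring
    _ = ENNReal.ofReal θ * (2 * (geomC n s * ω)) := by rw [hcancel, mul_one]

theorem avg_osc_lower {n : ℕ} (hn : 0 < n) {ρ M : ℝ} (hρ : 0 < ρ) (hM : 0 < M) :
    M * ρ * ((8 : ℝ)⁻¹ * ((4 : ℝ) ^ (n : ℝ))⁻¹) ≤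
      ⨍ y in ball (0 : Euc n) ρ, |M * max (ρ - ‖y‖) 0 -
        ⨍ z in ball (0 : Euc n) ρ, M * max (ρ - ‖z‖) 0| := by
  have hn1 : (1 : ℝ) ≤ (n : ℝ) := by exact_mod_cast hn
  set u : Euc n → ℝ := fun x => M * max (ρ - ‖x‖) 0 with hu
  set B : Set (Euc n) := ball (0 : Euc n) ρ with hB
  set ω := volume (ball (0 : Euc n) 1) with hω
  have hωR : 0 < ω.toReal :=
    ENNReal.toReal_pos (measure_ball_pos _ _ one_pos).ne' measure_ball_lt_top.ne
  have hvolB : volume B = ENNReal.ofReal (ρ ^ (n : ℝ)) * ω := euc_ball_vol hn _ hρ.le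
  have hBR : (volume B).toReal = ρ ^ (n : ℝ) * ω.toReal := by
    rw [hvolB, ENNReal.toReal_mul, ENNReal.toReal_ofReal (by positivity)]
  have hρn : (0 : ℝ) < ρ ^ (n : ℝ) := Real.rpow_pos_of_pos hρ _
  have hBR0 : 0 < (volume B).toReal := by rw [hBR]; positivity
  have hBtop : volume B ≠ ⊤ := measure_ball_lt_top.ne
  have hu_cont : Continuous u :=
    continuous_const.mul ((continuous_const.sub continuous_norm).max continuous_const)
  have hInt : IntegrableOn u B volume :=
    ((hu_cont.locallyIntegrable).integrableOn_isCompact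
      (isCompact_closedBall (0 : Euc n) ρ)).mono_set ball_subset_closedBall
  set m : ℝ := ⨍ z in B, u z with hm
  set g : Euc n → ℝ := fun y => |u y - m| with hg
  have hgInt : IntegrableOn g B volume :=
    (hInt.sub (integrableOn_const measure_ball_lt_top.ne)).abs
  -- common final computation
  have hfinal : ∀ sub : Set (Euc n), MeasurableSet sub → sub ⊆ B →
      (∀ y ∈ sub, M * ρ / 8 ≤ g y) →
      ρ ^ (n : ℝ) * ω.toReal * ((4 : ℝ) ^ (n : ℝ))⁻¹ ≤ (volume sub).toReal →
      M * ρ * ((8 : ℝ)⁻¹ * ((4 : ℝ) ^ (n : ℝ))⁻¹) ≤ ⨍ y in B, g y := by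
    intro sub hms hsubB hlow hvol
    have hsubInt : IntegrableOn g sub volume := hgInt.mono_set hsubB
    have h1 : M * ρ / 8 * (volume sub).toReal ≤ ∫ y in sub, g y := by
      have := setIntegral_mono_on (integrableOn_const
        ((measure_mono hsubB).trans_lt measure_ball_lt_top).ne) hsubInt hms hlow
      rwa [setIntegral_const, smul_eq_mul, mul_comm] at this
    have h2 : ∫ y in sub, g y ≤ ∫ y in B, g y := by
      refine setIntegral_mono_set hgInt ?_ hsubB.eventuallyLE
      exact Filter.Eventually.of_forall fun y => abs_nonneg _
    rw [setAverage_eq, smul_eq_mul]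
    have h3 : M * ρ / 8 * (ρ ^ (n : ℝ) * ω.toReal * ((4 : ℝ) ^ (n : ℝ))⁻¹) ≤ ∫ y in B, g y := by
      calc M * ρ / 8 * (ρ ^ (n : ℝ) * ω.toReal * ((4 : ℝ) ^ (n : ℝ))⁻¹)
          ≤ M * ρ / 8 * (volume sub).toReal := by
            refine mul_le_mul_of_nonneg_left hvol (by positivity)
        _ ≤ ∫ y in sub, g y := h1
        _ ≤ ∫ y in B, g y := h2
    calc M * ρ * ((8 : ℝ)⁻¹ * ((4 : ℝ) ^ (n : ℝ))⁻¹)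
        = (volume B).toReal⁻¹ * (M * ρ / 8 * (ρ ^ (n : ℝ) * ω.toReal * ((4 : ℝ) ^ (n : ℝ))⁻¹)) := by
          rw [hBR]
          field_simp
      _ ≤ (volume B).toReal⁻¹ * ∫ y in B, g y := by
          exact mul_le_mul_of_nonneg_left h3 (by positivity)
  rcases le_or_gt m (5 / 8 * (M * ρ)) with hmle | hmgt
  · -- the average is small: use the inner ball
    refine hfinal (ball 0 (ρ / 4)) measurableSet_ball (ball_subset_ball (by linarith)) ?_ ?_
    · intro y hy
      rw [mem_ball, dist_zero_right] at hy
      have huy : M * (ρ - ‖y‖) ≤ u y := mul_le_mul_of_nonneg_left (le_max_left _ _) hM.le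
      have hylow : M * ρ / 8 ≤ u y - m := by nlinarith [norm_nonneg y]
      exact hylow.trans (le_abs_self _)
    · have : volume (ball (0 : Euc n) (ρ / 4)) = ENNReal.ofReal ((ρ / 4) ^ (n : ℝ)) * ω :=
        euc_ball_vol hn _ (by positivity)
      rw [this, ENNReal.toReal_mul, ENNReal.toReal_ofReal (by positivity),
        Real.div_rpow hρ.le (by norm_num)]
      rw [div_eq_mul_inv]
      ring_nf
      exact le_rfl
  · -- the average is large: use the outer annulus
    have hsub : closedBall (0 : Euc n) (ρ / 2) ⊆ B := closedBall_subset_ball (by linarith)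
    refine hfinal (B \ closedBall 0 (ρ / 2)) (measurableSet_ball.diff measurableSet_closedBall)
      diff_subset ?_ ?_
    · intro y hy
      obtain ⟨hy1, hy2⟩ := hy
      rw [mem_closedBall, dist_zero_right, not_le] at hy2
      have huy : u y ≤ M * (ρ / 2) := by
        refine mul_le_mul_of_nonneg_left (max_le (by linarith) (by positivity)) hM.le
      have hylow : M * ρ / 8 ≤ m - u y := by nlinarith
      calc M * ρ / 8 ≤ m - u y := hylow
        _ ≤ |u y - m| := by rw [abs_sub_comm]; exact le_abs_self _
    · have hdiff : volume (B \ closedBall 0 (ρ / 2)) =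
          volume B - volume (closedBall (0 : Euc n) (ρ / 2)) :=
        measure_diff hsub measurableSet_closedBall.nullMeasurableSet
          (measure_closedBall_lt_top).ne
      have hcb : volume (closedBall (0 : Euc n) (ρ / 2)) =
          ENNReal.ofReal ((ρ / 2) ^ (n : ℝ)) * ω := euc_closedBall_vol _ (by positivity)
      have hle : volume (closedBall (0 : Euc n) (ρ / 2)) ≤ volume B := measure_mono hsub
      rw [hdiff, ENNReal.toReal_sub_of_le hle hBtop, hcb, hvolB, ENNReal.toReal_mul,
        ENNReal.toReal_mul, ENNReal.toReal_ofReal (by positivity),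
        ENNReal.toReal_ofReal (by positivity), Real.div_rpow hρ.le (by norm_num)]
      have h2n : (2 : ℝ) ≤ (2 : ℝ) ^ (n : ℝ) := by
        calc (2 : ℝ) = 2 ^ (1 : ℝ) := (Real.rpow_one 2).symm
          _ ≤ 2 ^ (n : ℝ) := Real.rpow_le_rpow_of_exponent_le one_le_two hn1
      have h4n : (4 : ℝ) ≤ (4 : ℝ) ^ (n : ℝ) := by
        calc (4 : ℝ) = 4 ^ (1 : ℝ) := (Real.rpow_one 4).symm
          _ ≤ 4 ^ (n : ℝ) := Real.rpow_le_rpow_of_exponent_le (by norm_num) hn1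
      have h2pos : (0 : ℝ) < (2 : ℝ) ^ (n : ℝ) := by positivity
      have h4pos : (0 : ℝ) < (4 : ℝ) ^ (n : ℝ) := by positivity
      rw [div_eq_mul_inv]
      have key : ((4 : ℝ) ^ (n : ℝ))⁻¹ + ((2 : ℝ) ^ (n : ℝ))⁻¹ ≤ 1 := by
        have i1 : ((4 : ℝ) ^ (n : ℝ))⁻¹ ≤ 4⁻¹ := by
          apply inv_anti₀ (by norm_num) h4n
        have i2 : ((2 : ℝ) ^ (n : ℝ))⁻¹ ≤ 2⁻¹ := by
          apply inv_anti₀ (by norm_num) h2n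
        nlinarith
      nlinarith [mul_pos hρn hωR, mul_pos (mul_pos hρn hωR) h2pos]

theorem keyEst {n : ℕ} (hn : 0 < n) {s : ℝ} (hs : 0 < s) (hs1 : s < 1)
    {A : ℝ → ℝ≥0∞} (hA : IsYoung A) {φ : ℝ → ℝ} (hφ : Admissible φ)
    {c : ℝ} (hc : 0 < c)
    (hemb : ∀ u : Euc n → ℝ, Measurable u → fracSemS n s A u < ⊤ →
      campSem n φ u ≤ ENNReal.ofReal c * fracSemS n s A u) :
    ∃ C : ℝ, 0 < C ∧ ∀ ρ : ℝ, 0 < ρ →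
      ρ ^ s * rcInv A (ENNReal.ofReal (ρ ^ (-(n : ℝ)))) ≤
        C * φ ((volume (ball (0 : Euc n) 1)).toReal ^ ((n : ℝ)⁻¹) * ρ) := by
  set ω := volume (ball (0 : Euc n) 1) with hω
  have hωR : 0 < ω.toReal :=
    ENNReal.toReal_pos (measure_ball_pos _ _ one_pos).ne' measure_ball_lt_top.ne
  set D : ℝ≥0∞ := 2 * (geomC n s * ω) with hD
  have hDtop : D ≠ ⊤ := by
    rw [hD]
    exact ENNReal.mul_ne_top (by norm_num)
      (ENNReal.mul_ne_top (geomC_lt_top n hs hs1).ne measure_ball_lt_top.ne)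
  set θ : ℝ := min 1 (D.toReal + 1)⁻¹ with hθ
  have hDt0 : (0 : ℝ) ≤ D.toReal := ENNReal.toReal_nonneg
  have hθ0 : 0 < θ := lt_min one_pos (by positivity)
  have hθ1 : θ ≤ 1 := min_le_left _ _
  have hθD : ENNReal.ofReal θ * D ≤ 1 := by
    have hDof : D = ENNReal.ofReal D.toReal := (ENNReal.ofReal_toReal hDtop).symm
    calc ENNReal.ofReal θ * D = ENNReal.ofReal θ * ENNReal.ofReal D.toReal := by rw [← hDof]
      _ = ENNReal.ofReal (θ * D.toReal) := (ENNReal.ofReal_mul hθ0.le).symm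
      _ ≤ ENNReal.ofReal 1 := by
          apply ENNReal.ofReal_le_ofReal
          have h1 : θ ≤ (D.toReal + 1)⁻¹ := min_le_right _ _
          have h2 : (D.toReal + 1) * (D.toReal + 1)⁻¹ = 1 := mul_inv_cancel₀ (by positivity)
          nlinarith
      _ = 1 := ENNReal.ofReal_one
  set κ : ℝ := (8 : ℝ)⁻¹ * ((4 : ℝ) ^ (n : ℝ))⁻¹ with hκ
  have h4pos : (0 : ℝ) < (4 : ℝ) ^ (n : ℝ) := by positivity
  have hκ0 : 0 < κ := by positivity
  refine ⟨c / (θ * κ), by positivity, ?_⟩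
  intro ρ hρ
  set M : ℝ := rcInv A (ENNReal.ofReal (ρ ^ (-(n : ℝ)))) with hM
  have hargpos : 0 < ω.toReal ^ ((n : ℝ)⁻¹) * ρ := by positivity
  have hφA : 0 < φ (ω.toReal ^ ((n : ℝ)⁻¹) * ρ) := hφ.1 _ hargpos
  rcases (rcInv_nonneg A (ENNReal.ofReal (ρ ^ (-(n : ℝ))))).eq_or_lt with hM0 | hMpos
  · have hMz : M = 0 := by rw [hM, ← hM0]
    rw [hMz, mul_zero]
    positivity
  · -- the main case
    rw [← hM] at hMpos
    have hAM : A M ≤ ENNReal.ofReal (ρ ^ (-(n : ℝ))) := by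
      rw [hM]
      exact apply_rcInv_le hA (hM ▸ hMpos)
    set u : Euc n → ℝ := fun x => M * max (ρ - ‖x‖) 0 with hu
    have hu_cont : Continuous u :=
      continuous_const.mul ((continuous_const.sub continuous_norm).max continuous_const)
    set lam : ℝ := ρ ^ (1 - s) / θ with hlam
    have hρs : (0 : ℝ) < ρ ^ (1 - s) := Real.rpow_pos_of_pos hρ _
    have hlam0 : 0 < lam := by rw [hlam]; positivity
    have hJ : Jfun n s A (fun x (_ : Fin 1) => u x / lam) ≤ 1 :=
      (J_le hn hs hs1 hA hρ hMpos hAM hθ0 hθ1 hlam).trans hθD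
    have hfrac : fracSemS n s A u ≤ ENNReal.ofReal lam := by
      apply sInf_le
      exact Set.mem_image_of_mem _ ⟨hlam0, hJ⟩
    have hfin : fracSemS n s A u < ⊤ := hfrac.trans_lt ENNReal.ofReal_lt_top
    have hcamp := hemb u hu_cont.measurable hfin
    -- lower bound for the Campanato seminorm through the ball B(0, ρ)
    have hosc_le : ENNReal.ofReal (oscQuot n φ u 0 ρ) ≤ campSem n φ u := by
      rw [campSem]
      exact le_iSup_of_le 0 (le_iSup_of_le ρ (le_iSup_of_le hρ le_rfl))
    have hargeq : (volume (ball (0 : Euc n) ρ)).toReal ^ ((n : ℝ)⁻¹) =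
        ω.toReal ^ ((n : ℝ)⁻¹) * ρ := by
      have hvolB : volume (ball (0 : Euc n) ρ) = ENNReal.ofReal (ρ ^ (n : ℝ)) * ω :=
        euc_ball_vol hn _ hρ.le
      have hn0 : ((n : ℝ)) ≠ 0 := by positivity
      rw [hvolB, ENNReal.toReal_mul, ENNReal.toReal_ofReal (by positivity),
        Real.mul_rpow (by positivity) hωR.le, ← Real.rpow_mul hρ.le,
        mul_inv_cancel₀ hn0, Real.rpow_one, mul_comm]
    have hosc_ge : (φ (ω.toReal ^ ((n : ℝ)⁻¹) * ρ))⁻¹ * (M * ρ * κ) ≤ oscQuot n φ u 0 ρ := by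
      rw [oscQuot, hargeq]
      refine mul_le_mul_of_nonneg_left ?_ (by positivity)
      exact avg_osc_lower hn hρ hMpos
    -- transfer through the embedding
    have hchain : ENNReal.ofReal ((φ (ω.toReal ^ ((n : ℝ)⁻¹) * ρ))⁻¹ * (M * ρ * κ)) ≤
        ENNReal.ofReal (c * lam) := by
      calc ENNReal.ofReal ((φ (ω.toReal ^ ((n : ℝ)⁻¹) * ρ))⁻¹ * (M * ρ * κ))
          ≤ ENNReal.ofReal (oscQuot n φ u 0 ρ) := ENNReal.ofReal_le_ofReal hosc_ge
        _ ≤ campSem n φ u := hosc_le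
        _ ≤ ENNReal.ofReal c * fracSemS n s A u := hcamp
        _ ≤ ENNReal.ofReal c * ENNReal.ofReal lam := mul_le_mul_right hfrac _
        _ = ENNReal.ofReal (c * lam) := (ENNReal.ofReal_mul hc.le).symm
    have hreal : (φ (ω.toReal ^ ((n : ℝ)⁻¹) * ρ))⁻¹ * (M * ρ * κ) ≤ c * lam :=
      (ENNReal.ofReal_le_ofReal_iff (by positivity)).1 hchain
    -- real arithmetic
    set φA : ℝ := φ (ω.toReal ^ ((n : ℝ)⁻¹) * ρ) with hφAdef
    have h5 : M * ρ * κ ≤ φA * (c * lam) := by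
      rw [← inv_mul_le_iff₀ hφA]
      exact hreal
    have hkeyρ : ρ ^ s * ρ ^ (1 - s) = ρ := by
      rw [← Real.rpow_add hρ, show s + (1 - s) = 1 by ring, Real.rpow_one]
    have h6 : ρ ^ s * (M * ρ * κ) ≤ ρ ^ s * (φA * (c * lam)) :=
      mul_le_mul_of_nonneg_left h5 (by positivity)
    have h7 : ρ ^ s * (φA * (c * lam)) = (c / (θ * κ) * φA) * (ρ * κ) := by
      rw [hlam]
      calc ρ ^ s * (φA * (c * (ρ ^ (1 - s) / θ)))
          = (ρ ^ s * ρ ^ (1 - s)) * (φA * c / θ) := by field_simp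
        _ = ρ * (φA * c / θ) := by rw [hkeyρ]
        _ = (c / (θ * κ) * φA) * (ρ * κ) := by field_simp
    have h8 : ρ ^ s * (M * ρ * κ) = (ρ ^ s * M) * (ρ * κ) := by ring
    have h9 : (ρ ^ s * M) * (ρ * κ) ≤ (c / (θ * κ) * φA) * (ρ * κ) := by
      rw [← h8, ← h7]; exact h6
    have hρκ : (0 : ℝ) < ρ * κ := by positivity
    exact le_of_mul_le_mul_right h9 hρκ

end Stmt1Aux
end Stmt1Aux

/-- Optimality of `𝓛^{φ_{s,A}}(ℝⁿ)`: if the Campanato space built on an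
admissible `φ` receives `V^{s,A}(ℝⁿ)`, then `φ_{s,A} ≲ φ`. -/
theorem stmt1 (n : ℕ) (hn : 0 < n) (s : ℝ) (hs : s ∈ Set.Ioo (0 : ℝ) 1)
    (A : ℝ → ℝ≥0∞) (hA : IsYoung A) (φ : ℝ → ℝ) (hφ : Admissible φ)
    (c : ℝ) (hc : 0 < c)
    (hemb : ∀ u : Euc n → ℝ, Measurable u → fracSemS n s A u < ⊤ →
      campSem n φ u ≤ ENNReal.ofReal c * fracSemS n s A u) :
    ∃ c' : ℝ, 0 < c' ∧ ∀ r : ℝ, 0 < r → phiSA n s A r ≤ c' * φ r := by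
  obtain ⟨hs0, hs1⟩ := hs
  obtain ⟨C, hC0, hkey⟩ := Stmt1Aux.keyEst hn hs0 hs1 hA hφ hc hemb
  have hωR : 0 < (volume (ball (0 : Euc n) 1)).toReal :=
    ENNReal.toReal_pos (measure_ball_pos _ _ one_pos).ne' measure_ball_lt_top.ne
  set β : ℝ := (volume (ball (0 : Euc n) 1)).toReal ^ ((n : ℝ)⁻¹) with hβ
  have hβ0 : 0 < β := Real.rpow_pos_of_pos hωR _
  have hβn : 0 < β ^ (-(n : ℝ)) := Real.rpow_pos_of_pos hβ0 _
  have hβs : 0 < β ^ s := Real.rpow_pos_of_pos hβ0 _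
  refine ⟨C * β ^ s * (1 + β ^ (-(n : ℝ))), by positivity, ?_⟩
  intro r hr
  have hρ0 : 0 < r / β := by positivity
  have h1 := hkey (r / β) hρ0
  have hβρ : β * (r / β) = r := by field_simp
  rw [hβρ] at h1
  have hφr : 0 < φ r := hφ.1 r hr
  have hrs : r ^ s = β ^ s * (r / β) ^ s := by
    rw [← Real.mul_rpow hβ0.le hρ0.le, hβρ]
  have hrn : r ^ (-(n : ℝ)) = β ^ (-(n : ℝ)) * (r / β) ^ (-(n : ℝ)) := by
    rw [← Real.mul_rpow hβ0.le hρ0.le, hβρ]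
  have hrc0 : 0 ≤ rcInv A (ENNReal.ofReal ((r / β) ^ (-(n : ℝ)))) := Stmt1Aux.rcInv_nonneg _ _
  show r ^ s * rcInv A (ENNReal.ofReal (r ^ (-(n : ℝ)))) ≤ _
  rcases le_or_gt 1 β with hβ1 | hβ1
  · have hle : r ^ (-(n : ℝ)) ≤ (r / β) ^ (-(n : ℝ)) := by
      rw [hrn]
      have hb1 : β ^ (-(n : ℝ)) ≤ 1 :=
        Real.rpow_le_one_of_one_le_of_nonpos hβ1 (neg_nonpos.2 (Nat.cast_nonneg n))
      nlinarith [Real.rpow_pos_of_pos hρ0 (-(n : ℝ))]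
    have hmono := Stmt1Aux.rcInv_mono hA (ENNReal.ofReal_le_ofReal hle) ENNReal.ofReal_ne_top
    calc r ^ s * rcInv A (ENNReal.ofReal (r ^ (-(n : ℝ))))
        ≤ r ^ s * rcInv A (ENNReal.ofReal ((r / β) ^ (-(n : ℝ)))) :=
          mul_le_mul_of_nonneg_left hmono (by positivity)
      _ = β ^ s * ((r / β) ^ s * rcInv A (ENNReal.ofReal ((r / β) ^ (-(n : ℝ))))) := by
          rw [hrs]; ring
      _ ≤ β ^ s * (C * φ r) := mul_le_mul_of_nonneg_left h1 (by positivity)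
      _ ≤ C * β ^ s * (1 + β ^ (-(n : ℝ))) * φ r := by
          nlinarith [mul_pos (mul_pos hC0 hβs) hφr,
            mul_pos (mul_pos (mul_pos hC0 hβs) hφr) hβn]
  · have hk1 : 1 ≤ β ^ (-(n : ℝ)) :=
      Real.one_le_rpow_of_pos_of_le_one_of_nonpos hβ0 hβ1.le (neg_nonpos.2 (Nat.cast_nonneg n))
    have heq : ENNReal.ofReal (r ^ (-(n : ℝ))) =
        ENNReal.ofReal (β ^ (-(n : ℝ))) * ENNReal.ofReal ((r / β) ^ (-(n : ℝ))) := by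
      rw [hrn, ENNReal.ofReal_mul hβn.le]
    have hmul := Stmt1Aux.rcInv_mul_le hA hk1
      (v := ENNReal.ofReal ((r / β) ^ (-(n : ℝ)))) ENNReal.ofReal_ne_top
    rw [← heq] at hmul
    calc r ^ s * rcInv A (ENNReal.ofReal (r ^ (-(n : ℝ))))
        ≤ r ^ s * (β ^ (-(n : ℝ)) * rcInv A (ENNReal.ofReal ((r / β) ^ (-(n : ℝ))))) :=
          mul_le_mul_of_nonneg_left hmul (by positivity)
      _ = β ^ s * β ^ (-(n : ℝ)) * ((r / β) ^ s *
            rcInv A (ENNReal.ofReal ((r / β) ^ (-(n : ℝ))))) := by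
          rw [hrs]; ring
      _ ≤ β ^ s * β ^ (-(n : ℝ)) * (C * φ r) := mul_le_mul_of_nonneg_left h1 (by positivity)
      _ ≤ C * β ^ s * (1 + β ^ (-(n : ℝ))) * φ r := by
          nlinarith [mul_pos (mul_pos hC0 hβs) hφr]
end

section
/- Let n ∈ ℕ, s ∈ (0,1) and let A be a Young function. Then there exists a constant c = c(n,s) such that for every u ∈ V^{s,A}(ℝⁿ), every r > 0 and every ball B_r ⊂ ℝⁿ of radius r, one has ‖u − u_{B_r}‖_{L^A(B_r)} ≤ c r^s |u|_{s,A,ℝⁿ}, where u_{B_r} = ⨍_{B_r} u dx. -/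
open MeasureTheory Metric Set Filter
open scoped ENNReal Topology

section Helpers

namespace IsYoung

variable {A : ℝ → ℝ≥0∞}

theorem smul_le (hY : IsYoung A) {θ t : ℝ} (hθ0 : 0 ≤ θ) (hθ1 : θ ≤ 1) (ht : 0 ≤ t) :
    A (θ * t) ≤ ENNReal.ofReal θ * A t := by
  have h := hY.2.1 t 0 θ ht le_rfl hθ0 hθ1
  simpa [hY.1] using h

theorem mono (hY : IsYoung A) {a b : ℝ} (ha : 0 ≤ a) (hab : a ≤ b) : A a ≤ A b := by
  rcases (ha.trans hab).lt_or_eq with hb | hb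
  · have hθ1 : a / b ≤ 1 := (div_le_one hb).2 hab
    have h := hY.smul_le (div_nonneg ha hb.le) hθ1 hb.le
    rw [div_mul_cancel₀ a hb.ne'] at h
    calc A a ≤ ENNReal.ofReal (a / b) * A b := h
      _ ≤ 1 * A b := mul_le_mul_left (ENNReal.ofReal_le_one.2 hθ1) _
      _ = A b := one_mul _
  · obtain rfl : b = 0 := hb.symm
    obtain rfl : a = 0 := le_antisymm hab ha
    exact le_rfl

theorem convex_toReal (hY : IsYoung A) {x y θ : ℝ} (hx : 0 ≤ x) (hy : 0 ≤ y)
    (hθ0 : 0 ≤ θ) (hθ1 : θ ≤ 1) (hfx : A x ≠ ⊤) (hfy : A y ≠ ⊤) :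
    (A (θ * x + (1 - θ) * y)).toReal ≤ θ * (A x).toReal + (1 - θ) * (A y).toReal := by
  have h := hY.2.1 x y θ hx hy hθ0 hθ1
  have h1 : ENNReal.ofReal θ * A x ≠ ⊤ := ENNReal.mul_ne_top ENNReal.ofReal_ne_top hfx
  have h2 : ENNReal.ofReal (1 - θ) * A y ≠ ⊤ := ENNReal.mul_ne_top ENNReal.ofReal_ne_top hfy
  have h3 := ENNReal.toReal_mono (ENNReal.add_ne_top.2 ⟨h1, h2⟩) h
  rwa [ENNReal.toReal_add h1 h2, ENNReal.toReal_mul, ENNReal.toReal_mul,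
    ENNReal.toReal_ofReal hθ0, ENNReal.toReal_ofReal (by linarith)] at h3

theorem chord (hY : IsYoung A) {t₀ m₁ : ℝ} (ht₀ : 0 ≤ t₀) (hlt : t₀ < m₁)
    (hfin : ∀ t, 0 ≤ t → t ≤ m₁ → A t ≠ ⊤) :
    ∀ t, 0 ≤ t →
      ENNReal.ofReal ((A t₀).toReal +
        (((A m₁).toReal - (A t₀).toReal) / (m₁ - t₀)) * (t - m₁)) ≤ A t := by
  have hden : (0:ℝ) < m₁ - t₀ := by linarith
  have hab : (A t₀).toReal ≤ (A m₁).toReal :=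
    ENNReal.toReal_mono (hfin m₁ (ht₀.trans hlt.le) le_rfl) (hY.mono ht₀ hlt.le)
  set a := (A t₀).toReal
  set b := (A m₁).toReal
  intro t ht
  have key : ∀ c : ℝ, (b - a) * (t - m₁) ≤ (c - a) * (m₁ - t₀) →
      a + (b - a) / (m₁ - t₀) * (t - m₁) ≤ c := by
    intro c hgoal'
    calc a + (b - a) / (m₁ - t₀) * (t - m₁) = a + (b - a) * (t - m₁) / (m₁ - t₀) := by
          rw [div_mul_eq_mul_div]
      _ ≤ a + (c - a) * (m₁ - t₀) / (m₁ - t₀) := by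
          exact add_le_add_right ((div_le_div_iff_of_pos_right hden).2 hgoal') a
      _ = c := by field_simp; ring
  rcases le_or_gt t m₁ with h1 | h1
  · rcases le_or_gt t₀ t with h2 | h2
    · -- middle
      have h3 : a ≤ (A t).toReal := ENNReal.toReal_mono (hfin t ht h1) (hY.mono ht₀ h2)
      refine le_trans (ENNReal.ofReal_le_ofReal (key _ ?_)) ENNReal.ofReal_toReal_le
      nlinarith
    · -- left of t₀
      have hm₁t : (0:ℝ) < m₁ - t := by linarith
      set θ := (m₁ - t₀) / (m₁ - t) with hθdef
      have hθ0 : 0 ≤ θ := div_nonneg hden.le hm₁t.le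
      have hθ1 : θ ≤ 1 := (div_le_one hm₁t).2 (by linarith)
      have heq : θ * t + (1 - θ) * m₁ = t₀ := by rw [hθdef]; field_simp; ring
      have hc := hY.convex_toReal ht (ht₀.trans hlt.le) hθ0 hθ1
        (hfin t ht (by linarith)) (hfin m₁ (ht₀.trans hlt.le) le_rfl)
      rw [heq] at hc
      have hθm : θ * (m₁ - t) = m₁ - t₀ := div_mul_cancel₀ _ hm₁t.ne'
      set c := (A t).toReal with hcdef
      have hc0 : 0 ≤ c := ENNReal.toReal_nonneg
      have hb0 : 0 ≤ b := ENNReal.toReal_nonneg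
      refine le_trans (ENNReal.ofReal_le_ofReal (key c ?_)) ENNReal.ofReal_toReal_le
      have hh := mul_le_mul_of_nonneg_right hc hm₁t.le
      have hs1 : θ * (m₁ - t) * c = (m₁ - t₀) * c := by rw [hθm]
      have hs2 : θ * (m₁ - t) * b = (m₁ - t₀) * b := by rw [hθm]
      nlinarith [mul_nonneg (sub_nonneg.2 hab) hden.le]
  · -- right of m₁
    by_cases hft : A t = ⊤
    · rw [hft]; exact le_top
    · have htt₀ : (0:ℝ) < t - t₀ := by linarith
      set θ := (t - m₁) / (t - t₀) with hθdef
      have hθ0 : 0 ≤ θ := div_nonneg (by linarith) htt₀.le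
      have hθ1 : θ ≤ 1 := (div_le_one htt₀).2 (by linarith)
      have heq : θ * t₀ + (1 - θ) * t = m₁ := by rw [hθdef]; field_simp; ring
      have hc := hY.convex_toReal ht₀ ht hθ0 hθ1 (hfin t₀ ht₀ hlt.le) hft
      rw [heq] at hc
      have hθm : θ * (t - t₀) = t - m₁ := div_mul_cancel₀ _ htt₀.ne'
      set c := (A t).toReal with hcdef
      have hc0 : 0 ≤ c := ENNReal.toReal_nonneg
      refine le_trans (ENNReal.ofReal_le_ofReal (key c ?_)) ENNReal.ofReal_toReal_le
      have hh := mul_le_mul_of_nonneg_right hc htt₀.le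
      have hs1 : θ * (t - t₀) * a = (t - m₁) * a := by rw [hθm]
      have hs2 : θ * (t - t₀) * c = (t - m₁) * c := by rw [hθm]
      nlinarith [mul_nonneg (sub_nonneg.2 hab) hden.le]



theorem measurable_comp (hY : IsYoung A) {α : Type*} [MeasurableSpace α] {f : α → ℝ}
    (hf : Measurable f) (hf0 : ∀ x, 0 ≤ f x) : Measurable fun x => A (f x) := by
  have hmono : Monotone fun t : ℝ => A (max t 0) := fun s t hst =>
    hY.mono (le_max_right s 0) (max_le_max hst le_rfl)
  have heq : (fun x => A (f x)) = (fun t : ℝ => A (max t 0)) ∘ f := by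
    funext x; simp [max_eq_left (hf0 x)]
  rw [heq]
  exact hmono.measurable.comp hf

theorem exists_linear_lb (hY : IsYoung A) :
    ∃ α t₀ : ℝ, 0 < α ∧ 0 ≤ t₀ ∧ ∀ t, 0 ≤ t → ENNReal.ofReal (α * (t - t₀)) ≤ A t := by
  obtain ⟨s₁, s₂, h₁, h₂, hne⟩ := hY.2.2.2
  obtain ⟨a, b, ha, hab, hAab⟩ : ∃ a b : ℝ, 0 < a ∧ a < b ∧ A a < A b := by
    rcases lt_trichotomy s₁ s₂ with h | h | h
    · exact ⟨s₁, s₂, h₁, h, (hY.mono h₁.le h.le).lt_of_ne hne⟩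
    · exact absurd (congrArg A h) hne
    · exact ⟨s₂, s₁, h₂, h, (hY.mono h₂.le h.le).lt_of_ne (Ne.symm hne)⟩
  by_cases hb : A b = ⊤
  · refine ⟨1, b, one_pos, by linarith, fun t ht => ?_⟩
    rcases le_or_gt t b with h | h
    · rw [ENNReal.ofReal_of_nonpos (by nlinarith)]; exact zero_le
    · have h2 := hY.mono (by linarith : (0:ℝ) ≤ b) h.le
      rw [hb, top_le_iff] at h2
      rw [h2]; exact le_top
  · have hfa : A a ≠ ⊤ := hAab.ne_top
    have hδ : 0 < (A b).toReal - (A a).toReal :=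
      sub_pos.2 ((ENNReal.toReal_lt_toReal hfa hb).2 hAab)
    have hba : (0:ℝ) < b - a := by linarith
    refine ⟨((A b).toReal - (A a).toReal) / (b - a), b, div_pos hδ hba, by linarith,
      fun t ht => ?_⟩
    rcases le_or_gt t b with h | h
    · rw [ENNReal.ofReal_of_nonpos]
      · exact zero_le
      · have hα : 0 < ((A b).toReal - (A a).toReal) / (b - a) := div_pos hδ hba
        nlinarith
    · by_cases hft : A t = ⊤
      · rw [hft]; exact le_top
      · have hta : (0:ℝ) < t - a := by linarith
        set θ := (b - a) / (t - a) with hθdef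
        have hθ0 : 0 ≤ θ := div_nonneg hba.le hta.le
        have hθ1 : θ ≤ 1 := (div_le_one hta).2 (by linarith)
        have heq : θ * t + (1 - θ) * a = b := by rw [hθdef]; field_simp; ring
        have hc := hY.convex_toReal (by linarith : (0:ℝ) ≤ t) ha.le hθ0 hθ1 hft hfa
        rw [heq] at hc
        have hθm : θ * (t - a) = b - a := div_mul_cancel₀ _ hta.ne'
        set c := (A t).toReal with hcdef
        set p := (A a).toReal
        set q := (A b).toReal
        have hq0 : 0 ≤ q := ENNReal.toReal_nonneg
        have hgoal' : (q - p) * (t - b) ≤ c * (b - a) := by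
          have hh := mul_le_mul_of_nonneg_right hc hta.le
          have hs1 : θ * (t - a) * c = (b - a) * c := by rw [hθm]
          have hs2 : θ * (t - a) * p = (b - a) * p := by rw [hθm]
          nlinarith [mul_nonneg hq0 hba.le]
        have hfinal : (q - p) / (b - a) * (t - b) ≤ c := by
          rw [div_mul_eq_mul_div, div_le_iff₀ hba]
          exact hgoal'
        calc ENNReal.ofReal ((q - p) / (b - a) * (t - b))
            ≤ ENNReal.ofReal c := ENNReal.ofReal_le_ofReal hfinal
          _ ≤ A t := ENNReal.ofReal_toReal_le

theorem jensen (hY : IsYoung A) {α : Type*} [MeasurableSpace α] {μ : Measure α}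
    [IsProbabilityMeasure μ] {g : α → ℝ} (hg0 : ∀ a, 0 ≤ g a) (hgi : Integrable g μ)
    (hmeas : Measurable fun a => A (g a)) :
    A (∫ a, g a ∂μ) ≤ ∫⁻ a, A (g a) ∂μ := by
  by_cases hI : ∫⁻ a, A (g a) ∂μ = ⊤
  · rw [hI]; exact le_top
  set m := ∫ a, g a ∂μ with hm
  have hm0 : 0 ≤ m := integral_nonneg hg0
  rcases hm0.lt_or_eq with hmpos | hmeq
  swap
  · rw [← hmeq, hY.1]; exact zero_le
  have hfin : ∀ t, 0 ≤ t → t < m → A t ≠ ⊤ := by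
    intro t ht htm hcon
    have hae : ∀ᵐ a ∂μ, A (g a) < ⊤ := ae_lt_top hmeas hI
    have hle : ∀ᵐ a ∂μ, g a ≤ t := by
      filter_upwards [hae] with a hlta
      by_contra hgt
      push_neg at hgt
      have h2 := hY.mono ht hgt.le
      rw [hcon, top_le_iff] at h2
      exact hlta.ne h2
    have h3 := integral_mono_ae hgi (integrable_const t) hle
    simp only [integral_const, measure_univ, probReal_univ, ENNReal.toReal_one, one_smul] at h3
    rw [← hm] at h3
    linarith
  have key : ∀ m₁ : ℝ, m / 2 ≤ m₁ → m₁ < m → A m₁ ≤ ∫⁻ a, A (g a) ∂μ := by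
    intro m₁ hhalf hlt
    set t₀ := 2 * m₁ - m with ht₀def
    have ht₀0 : 0 ≤ t₀ := by rw [ht₀def]; linarith
    have ht₀lt : t₀ < m₁ := by rw [ht₀def]; linarith
    have hfm₁ : A m₁ ≠ ⊤ := hfin m₁ (by linarith) hlt
    have hchord := hY.chord ht₀0 ht₀lt
      (fun t h1 h2 => hfin t h1 (lt_of_le_of_lt h2 hlt))
    set K := ((A m₁).toReal - (A t₀).toReal) / (m₁ - t₀) with hKdef
    have hKint : Integrable (fun a => K * (g a - m₁)) μ := by
      have h5 := (hgi.sub (integrable_const m₁)).const_mul K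
      simpa using h5
    have hfi : Integrable (fun a => (A t₀).toReal + K * (g a - m₁)) μ :=
      (integrable_const ((A t₀).toReal)).add hKint
    have hsubint : Integrable (fun a => g a - m₁) μ := by
      have h5 := hgi.sub (integrable_const m₁)
      exact h5
    have hintf : ∫ a, ((A t₀).toReal + K * (g a - m₁)) ∂μ = (A m₁).toReal := by
      rw [integral_add (integrable_const _) hKint, integral_const, integral_const_mul,
        integral_sub hgi (integrable_const m₁), integral_const]
      simp only [measure_univ, probReal_univ, ENNReal.toReal_one, one_smul]
      rw [← hm]
      have hmm : m - m₁ = m₁ - t₀ := by rw [ht₀def]; ring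
      rw [hmm, hKdef, div_mul_cancel₀ _ (ne_of_gt (by linarith : (0:ℝ) < m₁ - t₀))]
      ring
    calc A m₁ = ENNReal.ofReal ((A m₁).toReal) := (ENNReal.ofReal_toReal hfm₁).symm
      _ = ENNReal.ofReal (∫ a, ((A t₀).toReal + K * (g a - m₁)) ∂μ) := by rw [hintf]
      _ ≤ ENNReal.ofReal (∫ a, max ((A t₀).toReal + K * (g a - m₁)) 0 ∂μ) :=
          ENNReal.ofReal_le_ofReal
            (integral_mono hfi hfi.pos_part (fun a => le_max_left _ _))
      _ = ∫⁻ a, ENNReal.ofReal (max ((A t₀).toReal + K * (g a - m₁)) 0) ∂μ :=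
          ofReal_integral_eq_lintegral_ofReal hfi.pos_part
            (ae_of_all _ fun a => le_max_right _ _)
      _ = ∫⁻ a, ENNReal.ofReal ((A t₀).toReal + K * (g a - m₁)) ∂μ := by
          refine lintegral_congr fun a => ?_
          rcases le_or_gt ((A t₀).toReal + K * (g a - m₁)) 0 with h | h
          · rw [max_eq_right h, ENNReal.ofReal_of_nonpos h, ENNReal.ofReal_zero]
          · rw [max_eq_left h.le]
      _ ≤ ∫⁻ a, A (g a) ∂μ := lintegral_mono fun a => hchord (g a) (hg0 a)
  set t : ℕ → ℝ := fun j => m - m / 2 / (j + 1) with htdef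
  have hmem : ∀ j : ℕ, m / 2 ≤ t j ∧ t j < m := by
    intro j
    have h1 : (0:ℝ) < (j:ℝ) + 1 := by positivity
    constructor
    · have h2 : m / 2 / ((j:ℝ) + 1) ≤ m / 2 :=
        div_le_self (by linarith) (by linarith)
      rw [htdef]; simp only []; linarith
    · have h2 : 0 < m / 2 / ((j:ℝ) + 1) := by positivity
      rw [htdef]; simp only []; linarith
  have htend : Tendsto t atTop (𝓝 m) := by
    have h0 : Tendsto (fun j : ℕ => m / 2 / ((j:ℝ) + 1)) atTop (𝓝 0) :=
      Tendsto.div_atTop tendsto_const_nhds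
        (tendsto_atTop_add_const_right atTop 1 tendsto_natCast_atTop_atTop)
    simpa using tendsto_const_nhds.sub h0
  have hA : Tendsto (fun j => A (t j)) atTop (𝓝 (A m)) :=
    (hY.2.2.1 m hmpos).tendsto.comp
      (tendsto_nhdsWithin_of_tendsto_nhds_of_eventually_within _ htend
        (Eventually.of_forall fun j => (hmem j).2.le))
  exact le_of_tendsto hA (Eventually.of_forall fun j => key _ (hmem j).1 (hmem j).2)


end IsYoung

section KeyBound

private lemma key_bound (n : ℕ) (hn : 0 < n) {s : ℝ} (hs : s ∈ Set.Ioo (0 : ℝ) 1)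
    {A : ℝ → ℝ≥0∞} (hY : IsYoung A) {u : Euc n → ℝ} (hu : Measurable u)
    (x : Euc n) {r : ℝ} (hr : 0 < r) {lam : ℝ} (hlam : 0 < lam)
    (hJ : Jfun n s A (fun z (_ : Fin 1) => u z / lam) ≤ 1) :
    ∫⁻ y in ball x r,
        A (|u y - ⨍ z in ball x r, u z| /
          (max 1 ((2:ℝ) ^ n / (volume (ball (0 : Euc n) 1)).toReal) * (lam * (2 * r) ^ s)))
      ≤ 1 := by
  haveI : Nonempty (Fin n) := ⟨⟨0, hn⟩⟩
  obtain ⟨hs0, _hs1⟩ := hs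
  set B := ball x r with hB
  set ω := volume (ball (0 : Euc n) 1) with hω
  have hω0 : ω ≠ 0 := (measure_ball_pos volume _ one_pos).ne'
  have hωtop : ω ≠ ⊤ := measure_ball_lt_top.ne
  have hvB : volume B = ENNReal.ofReal (r ^ n) * ω := by
    rw [hB, Measure.addHaar_ball volume x hr.le, finrank_euclideanSpace_fin]
  have hrn0 : ENNReal.ofReal (r ^ n) ≠ 0 := (ENNReal.ofReal_pos.2 (by positivity)).ne'
  have hvB0 : volume B ≠ 0 := by rw [hvB]; exact mul_ne_zero hrn0 hω0
  have hvBtop : volume B ≠ ⊤ := by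
    rw [hvB]; exact ENNReal.mul_ne_top ENNReal.ofReal_ne_top hωtop
  have h2r : (0:ℝ) < 2 * r := by linarith
  set lam2 := lam * (2 * r) ^ s with hlam2def
  have hlam20 : 0 < lam2 := mul_pos hlam (Real.rpow_pos_of_pos h2r s)
  set c₁ := max 1 ((2:ℝ) ^ n / ω.toReal) with hc₁def
  have hc₁1 : (1:ℝ) ≤ c₁ := le_max_left _ _
  have hc₁0 : (0:ℝ) < c₁ := lt_of_lt_of_le one_pos hc₁1
  set P := ENNReal.ofReal ((2 * r) ^ (n:ℝ)) with hPdef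
  have hP0 : P ≠ 0 := (ENNReal.ofReal_pos.2 (Real.rpow_pos_of_pos h2r _)).ne'
  have hPtop : P ≠ ⊤ := ENNReal.ofReal_ne_top
  have hPinv : P⁻¹ ≠ ⊤ := ENNReal.inv_ne_top.2 hP0
  -- Step B : double integral bound over B × B
  have hK : ∫⁻ y in B, ∫⁻ z in B, A (|u y - u z| / lam2) ≤ P := by
    have hpt : ∀ y ∈ B, ∀ z ∈ B,
        A (|u y - u z| / lam2) * P⁻¹ ≤
          A (Real.sqrt (∑ i : Fin 1, (u y / lam - u z / lam) ^ 2) / ‖y - z‖ ^ s) /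
            ENNReal.ofReal (‖y - z‖ ^ (n:ℝ)) := by
      intro y hy z hz
      have hsqrt : Real.sqrt (∑ i : Fin 1, (u y / lam - u z / lam) ^ 2)
          = |u y - u z| / lam := by
        rw [Fin.sum_univ_one, Real.sqrt_sq_eq_abs, ← sub_div, abs_div, abs_of_pos hlam]
      rw [hsqrt]
      rcases eq_or_ne y z with rfl | hyz
      · simp [hY.1]
      · have hdist : ‖y - z‖ < 2 * r := by
          rw [← dist_eq_norm]
          calc dist y z ≤ dist y x + dist x z := dist_triangle y x z
            _ < r + r := add_lt_add (mem_ball.1 hy) (by rw [dist_comm]; exact mem_ball.1 hz)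
            _ = 2 * r := by ring
        have hdist0 : 0 < ‖y - z‖ := by
          rw [norm_pos_iff]; exact sub_ne_zero.2 hyz
        have harg : |u y - u z| / lam2 ≤ (|u y - u z| / lam) / ‖y - z‖ ^ s := by
          rw [hlam2def, ← div_div]
          exact div_le_div_of_nonneg_left (div_nonneg (abs_nonneg _) hlam.le)
            (Real.rpow_pos_of_pos hdist0 s)
            (Real.rpow_le_rpow hdist0.le hdist.le hs0.le)
        have hker : P⁻¹ ≤ (ENNReal.ofReal (‖y - z‖ ^ (n:ℝ)))⁻¹ := by
          rw [ENNReal.inv_le_inv]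
          exact ENNReal.ofReal_le_ofReal
            (Real.rpow_le_rpow hdist0.le hdist.le (Nat.cast_nonneg n))
        calc A (|u y - u z| / lam2) * P⁻¹
            ≤ A ((|u y - u z| / lam) / ‖y - z‖ ^ s) * (ENNReal.ofReal (‖y - z‖ ^ (n:ℝ)))⁻¹ :=
              mul_le_mul' (hY.mono (div_nonneg (abs_nonneg _) hlam20.le) harg) hker
          _ = _ := (div_eq_mul_inv _ _).symm
    have h1 : (∫⁻ y in B, ∫⁻ z in B, A (|u y - u z| / lam2)) * P⁻¹ ≤ 1 := by
      have heq : ∫⁻ y in B, ∫⁻ z in B, A (|u y - u z| / lam2) * P⁻¹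
          = (∫⁻ y in B, ∫⁻ z in B, A (|u y - u z| / lam2)) * P⁻¹ := by
        calc ∫⁻ y in B, ∫⁻ z in B, A (|u y - u z| / lam2) * P⁻¹
            = ∫⁻ y in B, (∫⁻ z in B, A (|u y - u z| / lam2)) * P⁻¹ :=
              lintegral_congr fun y => lintegral_mul_const' _ _ hPinv
          _ = _ := lintegral_mul_const' _ _ hPinv
      rw [← heq]
      calc ∫⁻ y in B, ∫⁻ z in B, A (|u y - u z| / lam2) * P⁻¹
          ≤ ∫⁻ y in B, ∫⁻ z in B,
              A (Real.sqrt (∑ i : Fin 1, (u y / lam - u z / lam) ^ 2) / ‖y - z‖ ^ s) /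
                ENNReal.ofReal (‖y - z‖ ^ (n:ℝ)) :=
            setLIntegral_mono' measurableSet_ball fun y hy =>
              setLIntegral_mono' measurableSet_ball fun z hz => hpt y hy z hz
        _ ≤ ∫⁻ y in B, ∫⁻ z,
              A (Real.sqrt (∑ i : Fin 1, (u y / lam - u z / lam) ^ 2) / ‖y - z‖ ^ s) /
                ENNReal.ofReal (‖y - z‖ ^ (n:ℝ)) :=
            lintegral_mono fun y => setLIntegral_le_lintegral _ _
        _ ≤ ∫⁻ y, ∫⁻ z,
              A (Real.sqrt (∑ i : Fin 1, (u y / lam - u z / lam) ^ 2) / ‖y - z‖ ^ s) /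
                ENNReal.ofReal (‖y - z‖ ^ (n:ℝ)) := setLIntegral_le_lintegral _ _
        _ ≤ 1 := hJ
    calc ∫⁻ y in B, ∫⁻ z in B, A (|u y - u z| / lam2)
        = (∫⁻ y in B, ∫⁻ z in B, A (|u y - u z| / lam2)) * P⁻¹ * P := by
          rw [mul_assoc, ENNReal.inv_mul_cancel hP0 hPtop, mul_one]
      _ ≤ 1 * P := mul_le_mul_left h1 _
      _ = P := one_mul _
  -- Step C : integrability of u on B
  have hFmeas : Measurable fun p : Euc n × Euc n => A (|u p.1 - u p.2| / lam2) := by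
    refine hY.measurable_comp ?_ (fun p => by positivity)
    exact ((hu.comp measurable_fst).sub (hu.comp measurable_snd)).abs.div_const lam2
  have hInner : Measurable fun y => ∫⁻ z in B, A (|u y - u z| / lam2) :=
    Measurable.lintegral_prod_right (f := fun y z => A (|u y - u z| / lam2)) hFmeas
  have hKfin : (∫⁻ y in B, ∫⁻ z in B, A (|u y - u z| / lam2)) ≠ ⊤ :=
    (lt_of_le_of_lt hK hPtop.lt_top).ne
  have hae : ∀ᵐ y ∂(volume.restrict B), (∫⁻ z in B, A (|u y - u z| / lam2)) < ⊤ :=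
    ae_lt_top hInner hKfin
  haveI : NeBot (ae (volume.restrict B)) :=
    ae_neBot.2 (by rwa [Ne, Measure.restrict_eq_zero])
  obtain ⟨y₀, hy₀⟩ := hae.exists
  obtain ⟨α, t₀, hα, ht₀, hlb⟩ := hY.exists_linear_lb
  have hIntB : IntegrableOn u B volume := by
    have hptw : ∀ z, ENNReal.ofReal |u y₀ - u z|
        ≤ ENNReal.ofReal (lam2 * t₀) + ENNReal.ofReal (lam2 / α) * A (|u y₀ - u z| / lam2) := by
      intro z
      have hd0 : 0 ≤ |u y₀ - u z| := abs_nonneg _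
      rcases le_or_gt (|u y₀ - u z|) (lam2 * t₀) with h | h
      · exact le_trans (ENNReal.ofReal_le_ofReal h) le_self_add
      · have hquot : t₀ < |u y₀ - u z| / lam2 := by
          rw [lt_div_iff₀ hlam20]; linarith [h, mul_comm lam2 t₀]
        have h1 : ENNReal.ofReal (α * (|u y₀ - u z| / lam2 - t₀)) ≤ A (|u y₀ - u z| / lam2) :=
          hlb _ (div_nonneg hd0 hlam20.le)
        have heq2 : lam2 * t₀ + (lam2 / α) * (α * (|u y₀ - u z| / lam2 - t₀)) = |u y₀ - u z| := by
          field_simp [hlam20.ne', hα.ne']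
          ring
        calc ENNReal.ofReal |u y₀ - u z|
            = ENNReal.ofReal (lam2 * t₀ + (lam2 / α) * (α * (|u y₀ - u z| / lam2 - t₀))) := by
              rw [heq2]
          _ = ENNReal.ofReal (lam2 * t₀)
              + ENNReal.ofReal ((lam2 / α) * (α * (|u y₀ - u z| / lam2 - t₀))) :=
              ENNReal.ofReal_add (by positivity)
                (mul_nonneg (by positivity) (mul_nonneg hα.le (by linarith)))
          _ = ENNReal.ofReal (lam2 * t₀)
              + ENNReal.ofReal (lam2 / α) * ENNReal.ofReal (α * (|u y₀ - u z| / lam2 - t₀)) := by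
              rw [ENNReal.ofReal_mul (div_nonneg hlam20.le hα.le)]
          _ ≤ _ := add_le_add_right (mul_le_mul_right h1 _) _
    have hfin1 : ∫⁻ z in B, ENNReal.ofReal |u y₀ - u z| < ⊤ := by
      calc ∫⁻ z in B, ENNReal.ofReal |u y₀ - u z|
          ≤ ∫⁻ z in B, (ENNReal.ofReal (lam2 * t₀)
              + ENNReal.ofReal (lam2 / α) * A (|u y₀ - u z| / lam2)) :=
            lintegral_mono fun z => hptw z
        _ = ENNReal.ofReal (lam2 * t₀) * volume B
            + ENNReal.ofReal (lam2 / α) * ∫⁻ z in B, A (|u y₀ - u z| / lam2) := by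
            rw [lintegral_add_left measurable_const, lintegral_const,
              Measure.restrict_apply_univ, lintegral_const_mul' _ _ ENNReal.ofReal_ne_top]
        _ < ⊤ := ENNReal.add_lt_top.2
            ⟨ENNReal.mul_lt_top ENNReal.ofReal_lt_top hvBtop.lt_top,
             ENNReal.mul_lt_top ENNReal.ofReal_lt_top hy₀⟩
    have hsub : Integrable (fun z => u z - u y₀) (volume.restrict B) := by
      refine ⟨(hu.sub measurable_const).aestronglyMeasurable, ?_⟩
      rw [hasFiniteIntegral_iff_norm]
      have heq3 : ∀ z : Euc n, ENNReal.ofReal ‖u z - u y₀‖ = ENNReal.ofReal |u y₀ - u z| := by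
        intro z; rw [Real.norm_eq_abs, abs_sub_comm]
      calc ∫⁻ z in B, ENNReal.ofReal ‖u z - u y₀‖
          = ∫⁻ z in B, ENNReal.ofReal |u y₀ - u z| := lintegral_congr fun z => heq3 z
        _ < ⊤ := hfin1
    have hconst : IntegrableOn (fun _ : Euc n => u y₀) B volume :=
      integrableOn_const hvBtop
    have heq4 : ((fun z => u z - u y₀) + fun _ => u y₀) = u := by funext z; simp
    exact heq4 ▸ (hsub.add hconst)
  -- Step D : Jensen pointwise
  set μB := (volume B)⁻¹ • volume.restrict B with hμBdef
  haveI : IsProbabilityMeasure μB := by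
    constructor
    rw [hμBdef, Measure.smul_apply, Measure.restrict_apply_univ, smul_eq_mul]
    exact ENNReal.inv_mul_cancel hvB0 hvBtop
  have huB : Integrable u μB := hIntB.smul_measure (ENNReal.inv_ne_top.2 hvB0)
  have huBeq : (⨍ z in B, u z) = ∫ z, u z ∂μB := by
    rw [average_eq, hμBdef, integral_smul_measure, measureReal_restrict_apply_univ, measureReal_def,
      ENNReal.toReal_inv]
  have hjen : ∀ y : Euc n,
      A (|u y - ⨍ z in B, u z| / lam2)
        ≤ (volume B)⁻¹ * ∫⁻ z in B, A (|u y - u z| / lam2) := by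
    intro y
    have hgi : Integrable (fun z => |u y - u z| / lam2) μB :=
      (((integrable_const (u y)).sub huB).abs.div_const lam2)
    have hg0 : ∀ z, 0 ≤ |u y - u z| / lam2 := fun z => div_nonneg (abs_nonneg _) hlam20.le
    have habs : |u y - ⨍ z in B, u z| ≤ ∫ z, |u y - u z| ∂μB := by
      calc |u y - ⨍ z in B, u z| = |∫ z, (u y - u z) ∂μB| := by
            rw [integral_sub (integrable_const _) huB, integral_const, probReal_univ,
              one_smul, huBeq]
        _ ≤ ∫ z, |u y - u z| ∂μB := by
            simpa [Real.norm_eq_abs] using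
              norm_integral_le_integral_norm (μ := μB) (fun z => u y - u z)
    have h1 : |u y - ⨍ z in B, u z| / lam2 ≤ ∫ z, |u y - u z| / lam2 ∂μB := by
      rw [integral_div]
      rw [div_eq_mul_inv, div_eq_mul_inv]
      exact mul_le_mul_of_nonneg_right habs (inv_nonneg.2 hlam20.le)
    have h2 := hY.jensen (μ := μB) hg0 hgi
      (hY.measurable_comp ((measurable_const.sub hu).abs.div_const lam2) hg0)
    calc A (|u y - ⨍ z in B, u z| / lam2)
        ≤ A (∫ z, |u y - u z| / lam2 ∂μB) :=
          hY.mono (div_nonneg (abs_nonneg _) hlam20.le) h1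
      _ ≤ ∫⁻ z, A (|u y - u z| / lam2) ∂μB := h2
      _ = (volume B)⁻¹ * ∫⁻ z in B, A (|u y - u z| / lam2) := by
          rw [hμBdef, lintegral_smul_measure, smul_eq_mul]
  -- Step E : integrate and rescale
  have h5 : ∫⁻ y in B, A (|u y - ⨍ z in B, u z| / lam2) ≤ ENNReal.ofReal c₁ := by
    calc ∫⁻ y in B, A (|u y - ⨍ z in B, u z| / lam2)
        ≤ ∫⁻ y in B, (volume B)⁻¹ * ∫⁻ z in B, A (|u y - u z| / lam2) :=
          lintegral_mono fun y => hjen y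
      _ = (volume B)⁻¹ * ∫⁻ y in B, ∫⁻ z in B, A (|u y - u z| / lam2) :=
          lintegral_const_mul' _ _ (ENNReal.inv_ne_top.2 hvB0)
      _ ≤ (volume B)⁻¹ * P := mul_le_mul_right hK _
      _ ≤ ENNReal.ofReal c₁ := by
          rw [hvB, hPdef]
          have h2rn : ((2 * r : ℝ)) ^ (n:ℝ) = 2 ^ n * r ^ n := by
            rw [Real.rpow_natCast, mul_pow]
          rw [h2rn, ENNReal.ofReal_mul (by positivity)]
          have hre : (ENNReal.ofReal (r ^ n) * ω)⁻¹
              * (ENNReal.ofReal ((2:ℝ) ^ n) * ENNReal.ofReal (r ^ n))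
              = ENNReal.ofReal ((2:ℝ) ^ n) * ω⁻¹ := by
            rw [ENNReal.mul_inv (Or.inl hrn0) (Or.inl ENNReal.ofReal_ne_top)]
            rw [show (ENNReal.ofReal (r ^ n))⁻¹ * ω⁻¹
                * (ENNReal.ofReal ((2:ℝ) ^ n) * ENNReal.ofReal (r ^ n))
                = ENNReal.ofReal ((2:ℝ) ^ n) * ω⁻¹
                  * ((ENNReal.ofReal (r ^ n))⁻¹ * ENNReal.ofReal (r ^ n)) from by ring,
              ENNReal.inv_mul_cancel hrn0 ENNReal.ofReal_ne_top, mul_one]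
          rw [hre]
          have hωr : ω = ENNReal.ofReal ω.toReal := (ENNReal.ofReal_toReal hωtop).symm
          rw [hωr, ← div_eq_mul_inv,
            ← ENNReal.ofReal_div_of_pos (ENNReal.toReal_pos hω0 hωtop)]
          exact ENNReal.ofReal_le_ofReal (le_max_right _ _)
  have hptc : ∀ y : Euc n,
      A (|u y - ⨍ z in B, u z| / (c₁ * lam2))
        ≤ ENNReal.ofReal c₁⁻¹ * A (|u y - ⨍ z in B, u z| / lam2) := by
    intro y
    have harg : |u y - ⨍ z in B, u z| / (c₁ * lam2)
        = c₁⁻¹ * (|u y - ⨍ z in B, u z| / lam2) := by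
      field_simp
    rw [harg]
    exact hY.smul_le (by positivity) (inv_le_one_of_one_le₀ hc₁1)
      (div_nonneg (abs_nonneg _) hlam20.le)
  calc ∫⁻ y in B, A (|u y - ⨍ z in B, u z| / (c₁ * lam2))
      ≤ ∫⁻ y in B, ENNReal.ofReal c₁⁻¹ * A (|u y - ⨍ z in B, u z| / lam2) :=
        lintegral_mono fun y => hptc y
    _ = ENNReal.ofReal c₁⁻¹ * ∫⁻ y in B, A (|u y - ⨍ z in B, u z| / lam2) :=
        lintegral_const_mul' _ _ ENNReal.ofReal_ne_top
    _ ≤ ENNReal.ofReal c₁⁻¹ * ENNReal.ofReal c₁ := mul_le_mul_right h5 _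
    _ = ENNReal.ofReal (c₁⁻¹ * c₁) := (ENNReal.ofReal_mul (by positivity)).symm
    _ = 1 := by rw [inv_mul_cancel₀ hc₁0.ne', ENNReal.ofReal_one]

end KeyBound

/-- For `s ∈ (0,1)` there is `c = c(n,s)` such that
`‖u - u_{B_r}‖_{L^A(B_r)} ≤ c r^s |u|_{s,A,ℝⁿ}` for every `u ∈ V^{s,A}(ℝⁿ)` and every
ball `B_r ⊂ ℝⁿ` of radius `r > 0`. -/
theorem stmt18 (n : ℕ) (hn : 0 < n) (s : ℝ) (hs : s ∈ Set.Ioo (0 : ℝ) 1) :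
    ∃ c : ℝ, 0 < c ∧ ∀ A : ℝ → ℝ≥0∞, IsYoung A →
      ∀ u : Euc n → ℝ, Measurable u → fracSemS n s A u < ⊤ →
        ∀ (x : Euc n) (r : ℝ), 0 < r →
          luxNorm A (volume.restrict (ball x r))
              (fun y => u y - ⨍ z in ball x r, u z) ≤
            ENNReal.ofReal (c * r ^ s) * fracSemS n s A u := by
  have hc2s : (0:ℝ) < (2:ℝ) ^ s := Real.rpow_pos_of_pos two_pos s
  refine ⟨max 1 ((2:ℝ) ^ n / (volume (ball (0 : Euc n) 1)).toReal) * (2:ℝ) ^ s,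
    mul_pos (lt_of_lt_of_le one_pos (le_max_left _ _)) hc2s, ?_⟩
  intro A hY u hu hufin x r hr
  set c₁ := max 1 ((2:ℝ) ^ n / (volume (ball (0 : Euc n) 1)).toReal) with hc₁def
  have hc₁0 : (0:ℝ) < c₁ := lt_of_lt_of_le one_pos (le_max_left _ _)
  have hrs : (0:ℝ) < r ^ s := Real.rpow_pos_of_pos hr s
  have hfs : fracSemS n s A u
      = sInf (ENNReal.ofReal ''
          {lam : ℝ | 0 < lam ∧ Jfun n s A (fun z (_ : Fin 1) => u z / lam) ≤ 1}) := rfl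
  set κ := ENNReal.ofReal (c₁ * (2:ℝ) ^ s * r ^ s) with hκdef
  have hκ0 : κ ≠ 0 := (ENNReal.ofReal_pos.2 (by positivity)).ne'
  have hκtop : κ ≠ ⊤ := ENNReal.ofReal_ne_top
  have hgoal : luxNorm A (volume.restrict (ball x r))
      (fun y => u y - ⨍ z in ball x r, u z) / κ ≤ fracSemS n s A u := by
    rw [hfs]
    apply le_sInf
    rintro e ⟨lam, ⟨hlam, hJ⟩, rfl⟩
    rw [ENNReal.div_le_iff_le_mul (Or.inl hκ0) (Or.inl hκtop)]
    have hkb := key_bound n hn hs hY hu x hr hlam hJ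
    have hmempos : 0 < c₁ * (lam * (2 * r) ^ s) :=
      mul_pos hc₁0 (mul_pos hlam (Real.rpow_pos_of_pos (by linarith) s))
    calc luxNorm A (volume.restrict (ball x r)) (fun y => u y - ⨍ z in ball x r, u z)
        ≤ ENNReal.ofReal (c₁ * (lam * (2 * r) ^ s)) :=
          sInf_le ⟨c₁ * (lam * (2 * r) ^ s), ⟨hmempos, hkb⟩, rfl⟩
      _ = ENNReal.ofReal lam * κ := by
          rw [hκdef, ← ENNReal.ofReal_mul hlam.le]
          congr 1
          rw [Real.mul_rpow (by norm_num : (0:ℝ) ≤ 2) hr.le]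
          ring
  have hfinal := (ENNReal.div_le_iff_le_mul (Or.inl hκ0) (Or.inl hκtop)).1 hgoal
  rw [mul_comm] at hfinal
  exact hfinal
end Helpers
end

section
/- Let B be a Young function, and let α ∈ (0,∞) and β ∈ (−1,∞) be such that α + β ≥ 0. For r > 0 define g_r^{**}(ρ) = ρ^{−1} ∫_0^ρ g_r^*(t) dt, where g_r^* is the decreasing rearrangement of the function t ↦ t^β χ_{(0,r)}(t) on (0,∞): explicitly g_r^*(t) = (r−t)^β χ_{(0,r)}(t) when β ≥ 0, and g_r^*(t) = t^β χ_{(0,r)}(t) when β ∈ (−1,0). Then there exist constants c₁, c₂ > 0 depending only on β such that c₁ r^{β+1} ‖ρ^{α−1} χ_{(r,∞)}(ρ)‖_{L^B(0,∞)} ≤ ‖ρ^{α} g_r^{**}(ρ)‖_{L^B(0,∞)} ≤ c₂ r^{β+1} ‖ρ^{α−1} χ_{(r,∞)}(ρ)‖_{L^B(0,∞)} for every r > 0. (This is the Orlicz-space instance of the paper's Lemma for rearrangement-invariant norms.) -/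
open MeasureTheory Metric Set Filter
open scoped ENNReal Topology

/-- The decreasing rearrangement `g_r^*` of `t ↦ t^β χ_{(0,r)}(t)` on `(0,∞)`. -/
noncomputable def gstar (β r t : ℝ) : ℝ :=
  if 0 ≤ β then (Set.Ioo (0 : ℝ) r).indicator (fun t => (r - t) ^ β) t
  else (Set.Ioo (0 : ℝ) r).indicator (fun t => t ^ β) t

/-- The maximal function `g_r^{**}(ρ) = ρ⁻¹ ∫_0^ρ g_r^*`. -/
noncomputable def gss (β r ρ : ℝ) : ℝ := ρ⁻¹ * ∫ t in Set.Ioc (0 : ℝ) ρ, gstar β r t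


section StmtAux
open MeasureTheory Set
open scoped ENNReal

lemma gstar_nonneg (β r t : ℝ) : 0 ≤ gstar β r t := by
  unfold gstar
  split_ifs
  · exact Set.indicator_nonneg (fun t ht => Real.rpow_nonneg (by linarith [ht.2]) β) t
  · exact Set.indicator_nonneg (fun t ht => Real.rpow_nonneg ht.1.le β) t

lemma gstar_measurable (β r : ℝ) : Measurable (gstar β r) := by
  unfold gstar
  split_ifs
  · exact Measurable.indicator (by fun_prop) measurableSet_Ioo
  · exact Measurable.indicator (by fun_prop) measurableSet_Ioo

lemma integral_rpow_Ioc {b e : ℝ} (hb : -1 < b) (he : 0 ≤ e) :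
    ∫ t in Set.Ioc (0:ℝ) e, t ^ b = e ^ (b+1) / (b+1) := by
  rw [← intervalIntegral.integral_of_le he, integral_rpow (Or.inl hb),
    Real.zero_rpow (by linarith)]
  ring

lemma integral_gstar_sub {b r : ℝ} (hb : 0 ≤ b) (hr : 0 ≤ r) :
    ∫ t in Set.Ioc (0:ℝ) r, (r - t) ^ b = r ^ (b+1) / (b+1) := by
  rw [← intervalIntegral.integral_of_le hr,
    intervalIntegral.integral_comp_sub_left (fun t => t ^ b) r]
  simp only [sub_self, sub_zero]
  rw [integral_rpow (Or.inl (by linarith)), Real.zero_rpow (by linarith)]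
  ring

lemma integral_gstar_eq {β r ρ : ℝ} (hβ : -1 < β) (hr : 0 < r) (hρ : r ≤ ρ) :
    ∫ t in Set.Ioc (0:ℝ) ρ, gstar β r t = r ^ (β+1) / (β+1) := by
  unfold gstar
  have hset : Set.Ioo (0:ℝ) r ∩ Set.Ioc 0 ρ = Set.Ioo 0 r := by
    rw [Set.inter_eq_left]; intro t ht; exact ⟨ht.1, ht.2.le.trans hρ⟩
  split_ifs with hb
  · rw [integral_indicator measurableSet_Ioo, Measure.restrict_restrict measurableSet_Ioo,
      hset, ← integral_Ioc_eq_integral_Ioo]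
    exact integral_gstar_sub hb hr.le
  · rw [integral_indicator measurableSet_Ioo, Measure.restrict_restrict measurableSet_Ioo,
      hset, ← integral_Ioc_eq_integral_Ioo]
    exact integral_rpow_Ioc hβ hr.le

lemma integral_gstar_le_neg {β r ρ : ℝ} (hβ : -1 < β) (hb : β < 0) (hρ0 : 0 < ρ) :
    ∫ t in Set.Ioc (0:ℝ) ρ, gstar β r t ≤ ρ ^ (β+1) / (β+1) := by
  simp only [gstar, if_neg (not_le.2 hb)]
  rw [integral_indicator measurableSet_Ioo,
    Measure.restrict_restrict measurableSet_Ioo]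
  have hint : IntegrableOn (fun t : ℝ => t ^ β) (Set.Ioc 0 ρ) :=
    (intervalIntegral.intervalIntegrable_rpow' hβ).1
  calc ∫ t in (Set.Ioo 0 r ∩ Set.Ioc 0 ρ), t ^ β ≤ ∫ t in Set.Ioc 0 ρ, t ^ β := by
        refine setIntegral_mono_set hint ?_ (Filter.Eventually.of_forall (fun x hx => hx.2))
        exact (ae_restrict_mem measurableSet_Ioc).mono fun t ht => Real.rpow_nonneg ht.1.le β
    _ = ρ ^ (β+1) / (β+1) := integral_rpow_Ioc hβ hρ0.le

lemma integral_gstar_le_const {β r ρ : ℝ} (hb : 0 ≤ β) (hr : 0 < r) (hρ0 : 0 < ρ) :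
    ∫ t in Set.Ioc (0:ℝ) ρ, gstar β r t ≤ ρ * r ^ β := by
  have hbd : ∀ t : ℝ, gstar β r t ≤ r ^ β := by
    intro t
    simp only [gstar, if_pos hb]
    rcases em (t ∈ Set.Ioo (0:ℝ) r) with h | h
    · rw [Set.indicator_of_mem h]
      exact Real.rpow_le_rpow (by linarith [h.2]) (by linarith [h.1]) hb
    · rw [Set.indicator_of_notMem h]
      exact Real.rpow_nonneg hr.le β
  have hconst : IntegrableOn (fun _ : ℝ => r ^ β) (Set.Ioc 0 ρ) :=
    integrableOn_const measure_Ioc_lt_top.ne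
  have hgint : IntegrableOn (gstar β r) (Set.Ioc 0 ρ) := by
    refine hconst.mono' ((gstar_measurable β r).aestronglyMeasurable.restrict) ?_
    exact Filter.Eventually.of_forall fun t => by
      rw [Real.norm_eq_abs, abs_of_nonneg (gstar_nonneg β r t)]; exact hbd t
  calc ∫ t in Set.Ioc (0:ℝ) ρ, gstar β r t ≤ ∫ _ in Set.Ioc (0:ℝ) ρ, r ^ β :=
        setIntegral_mono_on hgint hconst measurableSet_Ioc fun t _ => hbd t
    _ = ρ * r ^ β := by
        rw [setIntegral_const, measureReal_def, Real.volume_Ioc, sub_zero, ENNReal.toReal_ofReal hρ0.le,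
          smul_eq_mul]

lemma gss_nonpos_eq {β r ρ : ℝ} (h : ρ ≤ 0) : gss β r ρ = 0 := by
  unfold gss
  rw [Set.Ioc_eq_empty (by simpa using h.not_gt), Measure.restrict_empty,
    integral_zero_measure, mul_zero]

lemma gss_nonneg (β r ρ : ℝ) : 0 ≤ gss β r ρ := by
  rcases le_or_gt ρ 0 with h | h
  · rw [gss_nonpos_eq h]
  · exact mul_nonneg (inv_nonneg.2 h.le) (integral_nonneg fun t => gstar_nonneg β r t)

lemma gss_eq {β r ρ : ℝ} (hβ : -1 < β) (hr : 0 < r) (hρ : r ≤ ρ) :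
    gss β r ρ = ρ⁻¹ * (r ^ (β+1) / (β+1)) := by
  unfold gss; rw [integral_gstar_eq hβ hr hρ]

lemma aux_mul_sInf {c : ℝ≥0∞} (hc0 : c ≠ 0) (hct : c ≠ ⊤) (S : Set ℝ≥0∞) :
    c * sInf S = sInf ((c * ·) '' S) := by
  apply le_antisymm
  · refine le_sInf ?_
    rintro _ ⟨s, hs, rfl⟩
    exact mul_le_mul_right (sInf_le hs) c
  · have h1 : c⁻¹ * sInf ((c * ·) '' S) ≤ sInf S := by
      refine le_sInf fun s hs => ?_
      have h2 : sInf ((c * ·) '' S) ≤ c * s := sInf_le ⟨s, hs, rfl⟩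
      calc c⁻¹ * sInf ((c * ·) '' S) ≤ c⁻¹ * (c * s) := mul_le_mul_right h2 _
        _ = s := by rw [← mul_assoc, ENNReal.inv_mul_cancel hc0 hct, one_mul]
    calc sInf ((c * ·) '' S) = c * (c⁻¹ * sInf ((c * ·) '' S)) := by
          rw [← mul_assoc, ENNReal.mul_inv_cancel hc0 hct, one_mul]
      _ ≤ c * sInf S := mul_le_mul_right h1 c

lemma lux_le_general {X : Type*} [MeasurableSpace X] (B : ℝ → ℝ≥0∞) (μ : Measure X)
    (f g : X → ℝ) {a : ℝ} (ha : 0 < a)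
    (h : ∀ lam : ℝ, 0 < lam → (∫⁻ x, B (|g x| / lam) ∂μ) ≤ 1 →
      (∫⁻ x, B (|f x| / (a * lam)) ∂μ) ≤ 1) :
    luxNorm B μ f ≤ ENNReal.ofReal a * luxNorm B μ g := by
  unfold luxNorm
  rw [aux_mul_sInf (ENNReal.ofReal_pos.mpr ha).ne' ENNReal.ofReal_ne_top]
  refine le_sInf ?_
  rintro _ ⟨_, ⟨lam, ⟨hlam, hint⟩, rfl⟩, rfl⟩
  simp only
  rw [← ENNReal.ofReal_mul ha.le]
  exact sInf_le ⟨a * lam, ⟨mul_pos ha hlam, h lam hlam hint⟩, rfl⟩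

lemma young_mono {B : ℝ → ℝ≥0∞} (hB : IsYoung B) {x y : ℝ} (hx : 0 ≤ x) (hxy : x ≤ y) :
    B x ≤ B y := by
  rcases eq_or_lt_of_le (hx.trans hxy) with hy | hy
  · obtain rfl : y = 0 := hy.symm
    obtain rfl : x = 0 := le_antisymm hxy hx
    exact le_rfl
  · have ht0 : 0 ≤ x / y := div_nonneg hx hy.le
    have ht1 : x / y ≤ 1 := (div_le_one hy).2 hxy
    have hc := hB.2.1 y 0 (x / y) hy.le le_rfl ht0 ht1
    have hxeq : x / y * y + (1 - x / y) * 0 = x := by field_simp; ring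
    calc B x = B (x / y * y + (1 - x / y) * 0) := by rw [hxeq]
      _ ≤ ENNReal.ofReal (x / y) * B y + ENNReal.ofReal (1 - x / y) * B 0 := hc
      _ = ENNReal.ofReal (x / y) * B y := by rw [hB.1, mul_zero, add_zero]
      _ ≤ 1 * B y := mul_le_mul_left (ENNReal.ofReal_le_one.2 ht1) _
      _ = B y := one_mul _

lemma young_half {B : ℝ → ℝ≥0∞} (hB : IsYoung B) {z : ℝ} (hz : 0 ≤ z) :
    B (z / 2) ≤ ENNReal.ofReal (1/2) * B z := by
  have hc := hB.2.1 z 0 (1/2) hz le_rfl (by norm_num) (by norm_num)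
  have heq : (1/2 : ℝ) * z + (1 - 1/2) * 0 = z / 2 := by ring
  rw [heq] at hc
  calc B (z/2) ≤ ENNReal.ofReal (1/2) * B z + ENNReal.ofReal (1 - 1/2) * B 0 := hc
    _ = ENNReal.ofReal (1/2) * B z := by rw [hB.1, mul_zero, add_zero]

end StmtAux

/-- Orlicz-space instance of the lemma on rearrangement-invariant norms:
for `α > 0`, `β > -1` with `α + β ≥ 0`,
`‖ρ^α g_r^{**}(ρ)‖_{L^B(0,∞)} ≈ r^{β+1} ‖ρ^{α-1} χ_{(r,∞)}(ρ)‖_{L^B(0,∞)}`, with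
equivalence constants depending only on `β`. -/
theorem stmt19 (β : ℝ) (hβ : -1 < β) :
    ∃ c₁ c₂ : ℝ, 0 < c₁ ∧ 0 < c₂ ∧
      ∀ B : ℝ → ℝ≥0∞, IsYoung B → ∀ α : ℝ, 0 < α → 0 ≤ α + β → ∀ r : ℝ, 0 < r →
        ENNReal.ofReal (c₁ * r ^ (β + 1)) *
            luxNorm B (volume.restrict (Set.Ioi (0 : ℝ)))
              (fun ρ => (Set.Ioi r).indicator (fun ρ => ρ ^ (α - 1)) ρ) ≤
          luxNorm B (volume.restrict (Set.Ioi (0 : ℝ))) (fun ρ => ρ ^ α * gss β r ρ) ∧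
        luxNorm B (volume.restrict (Set.Ioi (0 : ℝ))) (fun ρ => ρ ^ α * gss β r ρ) ≤
          ENNReal.ofReal (c₂ * r ^ (β + 1)) *
            luxNorm B (volume.restrict (Set.Ioi (0 : ℝ)))
              (fun ρ => (Set.Ioi r).indicator (fun ρ => ρ ^ (α - 1)) ρ) := by
  have hb1 : (0:ℝ) < β + 1 := by linarith
  set M : ℝ := max 1 (β+1)⁻¹ with hM
  have hM1 : (1:ℝ) ≤ M := le_max_left _ _
  have hMb : (β+1)⁻¹ ≤ M := le_max_right _ _
  have hM0 : (0:ℝ) < M := lt_of_lt_of_le one_pos hM1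
  refine ⟨(β+1)⁻¹, 4 * M, inv_pos.2 hb1, by positivity, ?_⟩
  intro B hB α hα hαβ r hr
  set μ := volume.restrict (Set.Ioi (0:ℝ)) with hμdef
  set h₀ : ℝ → ℝ := fun ρ => (Set.Ioi r).indicator (fun ρ => ρ ^ (α - 1)) ρ with hh₀
  set f : ℝ → ℝ := fun ρ => ρ ^ α * gss β r ρ with hfdef
  have hrb : (0:ℝ) < r ^ (β+1) := Real.rpow_pos_of_pos hr _
  have hf0 : ∀ ρ : ℝ, ρ ≤ 0 → f ρ = 0 := fun ρ h => by
    rw [hfdef]; simp [gss_nonpos_eq h]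
  have hfpos : ∀ ρ : ℝ, r < ρ → f ρ = (β+1)⁻¹ * r ^ (β+1) * ρ ^ (α-1) := by
    intro ρ hρ
    have hρ0 : 0 < ρ := hr.trans hρ
    have hsplit : ρ ^ (α - 1) = ρ ^ α * ρ⁻¹ := by
      rw [Real.rpow_sub hρ0, Real.rpow_one, div_eq_mul_inv]
    rw [hfdef]; dsimp only; rw [gss_eq hβ hr hρ.le, hsplit]; ring
  have hfnn : ∀ ρ : ℝ, 0 ≤ f ρ := by
    intro ρ
    rcases le_or_gt ρ 0 with h | h
    · rw [hf0 ρ h]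
    · exact mul_nonneg (Real.rpow_nonneg h.le _) (gss_nonneg β r ρ)
  have hrsplit : r ^ (α+β) = r ^ (α-1) * r ^ (β+1) := by
    rw [← Real.rpow_add hr]; congr 1; ring
  have hfle : ∀ ρ : ℝ, 0 < ρ → ρ ≤ r → f ρ ≤ M * r ^ (α + β) := by
    intro ρ hρ0 hρ
    have hρa : (0:ℝ) ≤ ρ ^ α := Real.rpow_nonneg hρ0.le _
    rcases le_or_gt 0 β with hbb | hbb
    · have hI := integral_gstar_le_const hbb hr hρ0 (r := r)
      have h1 : f ρ ≤ ρ ^ α * (ρ⁻¹ * (ρ * r ^ β)) :=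
        mul_le_mul_of_nonneg_left
          (mul_le_mul_of_nonneg_left hI (inv_nonneg.2 hρ0.le)) hρa
      have h2 : ρ⁻¹ * (ρ * r ^ β) = r ^ β := by field_simp
      have h3 : ρ ^ α * r ^ β ≤ r ^ α * r ^ β :=
        mul_le_mul_of_nonneg_right (Real.rpow_le_rpow hρ0.le hρ hα.le)
          (Real.rpow_nonneg hr.le _)
      calc f ρ ≤ ρ ^ α * r ^ β := by rw [← h2]; exact h1
        _ ≤ r ^ α * r ^ β := h3
        _ = r ^ (α+β) := (Real.rpow_add hr α β).symm
        _ ≤ M * r ^ (α+β) := le_mul_of_one_le_left (Real.rpow_nonneg hr.le _) hM1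
    · have hI := integral_gstar_le_neg hβ hbb hρ0 (r := r)
      have h1 : f ρ ≤ ρ ^ α * (ρ⁻¹ * (ρ ^ (β+1) / (β+1))) :=
        mul_le_mul_of_nonneg_left
          (mul_le_mul_of_nonneg_left hI (inv_nonneg.2 hρ0.le)) hρa
      have h2 : ρ⁻¹ * (ρ ^ (β+1) / (β+1)) = ρ ^ β * (β+1)⁻¹ := by
        rw [Real.rpow_add_one hρ0.ne' β]; field_simp
      have h3 : ρ ^ α * (ρ ^ β * (β+1)⁻¹) = ρ ^ (α+β) * (β+1)⁻¹ := by
        rw [Real.rpow_add hρ0 α β]; ring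
      calc f ρ ≤ ρ ^ (α+β) * (β+1)⁻¹ := by rw [← h3, ← h2]; exact h1
        _ ≤ r ^ (α+β) * M := by
            apply mul_le_mul (Real.rpow_le_rpow hρ0.le hρ hαβ) hMb
              (inv_nonneg.2 hb1.le) (Real.rpow_nonneg hr.le _)
        _ = M * r ^ (α+β) := by ring
  constructor
  · -- lower bound
    have ha : (0:ℝ) < (β+1)⁻¹ * r ^ (β+1) := mul_pos (inv_pos.2 hb1) hrb
    have key : luxNorm B μ h₀ ≤ ENNReal.ofReal ((β+1)⁻¹ * r ^ (β+1))⁻¹ * luxNorm B μ f := by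
      apply lux_le_general B μ h₀ f (inv_pos.2 ha)
      intro lam hlam hint
      refine le_trans (lintegral_mono fun ρ => ?_) hint
      rcases le_or_gt ρ r with h | h
      · have hz : h₀ ρ = 0 := by
          rw [hh₀]; exact Set.indicator_of_notMem (by simpa using h.not_gt) _
        rw [hz, abs_zero, zero_div, hB.1]
        exact zero_le
      · have hρ0 : 0 < ρ := hr.trans h
        have hz : h₀ ρ = ρ ^ (α-1) := by rw [hh₀]; exact Set.indicator_of_mem h _
        have harg : |h₀ ρ| / (((β+1)⁻¹ * r ^ (β+1))⁻¹ * lam) = |f ρ| / lam := by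
          rw [hz, hfpos ρ h, abs_of_nonneg (Real.rpow_nonneg hρ0.le _),
            abs_of_nonneg (by positivity)]
          field_simp
        rw [harg]
    calc ENNReal.ofReal ((β+1)⁻¹ * r ^ (β+1)) * luxNorm B μ h₀
        ≤ ENNReal.ofReal ((β+1)⁻¹ * r ^ (β+1)) *
            (ENNReal.ofReal ((β+1)⁻¹ * r ^ (β+1))⁻¹ * luxNorm B μ f) :=
          mul_le_mul_right key _
      _ = luxNorm B μ f := by
          rw [← mul_assoc, ← ENNReal.ofReal_mul ha.le, mul_inv_cancel₀ ha.ne',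
            ENNReal.ofReal_one, one_mul]
  · -- upper bound
    apply lux_le_general B μ f h₀ (a := 4 * M * r ^ (β+1)) (by positivity)
    intro lam hlam hint
    set al : ℝ := 4 * M * r ^ (β+1) * lam with hal'
    have hal : 0 < al := by positivity
    set z : ℝ := r ^ (α-1) / lam with hz'
    have hznn : 0 ≤ z := by positivity
    have half1 : ENNReal.ofReal (1/2) + ENNReal.ofReal (1/2) = 1 := by
      rw [← ENNReal.ofReal_add (by norm_num) (by norm_num)]; norm_num
    have hμsplit : μ = volume.restrict (Set.Ioc 0 r) + volume.restrict (Set.Ioi r) := by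
      rw [hμdef, ← Measure.restrict_union (Set.Ioc_disjoint_Ioi le_rfl) measurableSet_Ioi,
        Set.Ioc_union_Ioi_eq_Ioi hr.le]
    rw [hμsplit, lintegral_add_measure]
    have hIoc_le : ∫⁻ ρ in Set.Ioc r (2*r), B (|h₀ ρ| / lam) ≤ 1 := by
      refine le_trans (lintegral_mono' (Measure.restrict_mono ?_ le_rfl) le_rfl) hint
      exact fun x hx => hr.trans hx.1
    have hIoi_le : ∫⁻ ρ in Set.Ioi r, B (|h₀ ρ| / lam) ≤ 1 := by
      refine le_trans (lintegral_mono' (Measure.restrict_mono ?_ le_rfl) le_rfl) hint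
      exact fun x hx => hr.trans hx
    have hI1 : ∫⁻ ρ in Set.Ioc (0:ℝ) r, B (|f ρ| / al) ≤ ENNReal.ofReal (1/2) := by
      have hpt : ∀ ρ ∈ Set.Ioc (0:ℝ) r,
          B (|f ρ| / al) ≤ ENNReal.ofReal (1/2) * B (z/2) := by
        intro ρ hρ
        have h1 : |f ρ| / al ≤ (z/2)/2 := by
          rw [abs_of_nonneg (hfnn ρ)]
          calc f ρ / al ≤ (M * r ^ (α+β)) / al := by
                apply div_le_div_of_nonneg_right ?_ hal.le
                exact hfle ρ hρ.1 hρ.2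
            _ = (z/2)/2 := by
                rw [hrsplit, hz', hal']
                field_simp
                ring
        calc B (|f ρ| / al) ≤ B ((z/2)/2) := young_mono hB (by positivity) h1
          _ ≤ ENNReal.ofReal (1/2) * B (z/2) := young_half hB (by positivity)
      have hcomp : ∀ ρ : ℝ,
          (Set.Ioc r (2*r)).indicator (fun _ => B (z/2)) ρ ≤ B (|h₀ ρ| / lam) := by
        intro ρ
        rcases em (ρ ∈ Set.Ioc r (2*r)) with h | h
        · rw [Set.indicator_of_mem h]
          have hρ0 : 0 < ρ := hr.trans h.1
          have hz : h₀ ρ = ρ ^ (α-1) := by rw [hh₀]; exact Set.indicator_of_mem h.1 _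
          rw [hz, abs_of_nonneg (Real.rpow_nonneg hρ0.le _)]
          apply young_mono hB (by positivity)
          have hkey : r ^ (α-1) / 2 ≤ ρ ^ (α-1) := by
            rcases le_or_gt 1 α with h1 | h1
            · have h2 : r ^ (α-1) ≤ ρ ^ (α-1) :=
                Real.rpow_le_rpow hr.le h.1.le (by linarith)
              have h3 : (0:ℝ) ≤ r ^ (α-1) := Real.rpow_nonneg hr.le _
              linarith
            · have h2 : (2*r) ^ (α-1) ≤ ρ ^ (α-1) :=
                Real.rpow_le_rpow_of_nonpos hρ0 h.2 (by linarith)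
              have h3 : (2*r) ^ (α-1) = 2 ^ (α-1) * r ^ (α-1) :=
                Real.mul_rpow (by norm_num) hr.le
              have h4 : (2:ℝ) ^ (-1:ℝ) ≤ 2 ^ (α-1) :=
                Real.rpow_le_rpow_of_exponent_le (by norm_num) (by linarith)
              have h5 : (2:ℝ) ^ (-1:ℝ) = 1/2 := by
                rw [Real.rpow_neg_one]; norm_num
              have h6 : (0:ℝ) ≤ r ^ (α-1) := Real.rpow_nonneg hr.le _
              have h7 : (1/2:ℝ) * r ^ (α-1) ≤ 2 ^ (α-1) * r ^ (α-1) :=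
                mul_le_mul_of_nonneg_right (by rw [← h5]; exact h4) h6
              linarith
          calc z/2 = (r ^ (α-1) / 2) / lam := by rw [hz']; ring
            _ ≤ ρ ^ (α-1) / lam := div_le_div_of_nonneg_right hkey hlam.le
        · rw [Set.indicator_of_notMem h]
          exact zero_le
      have hconstint : ∫⁻ ρ in Set.Ioc r (2*r),
          (Set.Ioc r (2*r)).indicator (fun _ => B (z/2)) ρ = B (z/2) * ENNReal.ofReal r := by
        rw [lintegral_indicator measurableSet_Ioc, Measure.restrict_restrict measurableSet_Ioc,
          Set.inter_self, setLIntegral_const, Real.volume_Ioc]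
        congr 2
        ring
      have hBz : B (z/2) * ENNReal.ofReal r ≤ 1 := by
        calc B (z/2) * ENNReal.ofReal r
            = ∫⁻ ρ in Set.Ioc r (2*r),
                (Set.Ioc r (2*r)).indicator (fun _ => B (z/2)) ρ := hconstint.symm
          _ ≤ ∫⁻ ρ in Set.Ioc r (2*r), B (|h₀ ρ| / lam) := lintegral_mono hcomp
          _ ≤ 1 := hIoc_le
      calc ∫⁻ ρ in Set.Ioc (0:ℝ) r, B (|f ρ| / al)
          ≤ ∫⁻ _ in Set.Ioc (0:ℝ) r, (ENNReal.ofReal (1/2) * B (z/2)) :=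
            lintegral_mono_ae ((ae_restrict_mem measurableSet_Ioc).mono fun ρ hρ => hpt ρ hρ)
        _ = ENNReal.ofReal (1/2) * (B (z/2) * ENNReal.ofReal r) := by
            rw [setLIntegral_const, Real.volume_Ioc, sub_zero, mul_assoc]
        _ ≤ ENNReal.ofReal (1/2) * 1 := mul_le_mul_right hBz _
        _ = ENNReal.ofReal (1/2) := mul_one _
    have hI2 : ∫⁻ ρ in Set.Ioi r, B (|f ρ| / al) ≤ ENNReal.ofReal (1/2) := by
      have hpt : ∀ ρ ∈ Set.Ioi r,
          B (|f ρ| / al) ≤ ENNReal.ofReal (1/2) * B (|h₀ ρ| / lam) := by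
        intro ρ hρ
        have hρ0 : 0 < ρ := hr.trans hρ
        have hz : h₀ ρ = ρ ^ (α-1) := by rw [hh₀]; exact Set.indicator_of_mem hρ _
        have hρa : (0:ℝ) ≤ ρ ^ (α-1) := Real.rpow_nonneg hρ0.le _
        have h1 : |f ρ| / al ≤ (ρ ^ (α-1) / lam) / 2 := by
          rw [abs_of_nonneg (hfnn ρ), hfpos ρ hρ]
          have hle : (β+1)⁻¹ * r ^ (β+1) * ρ ^ (α-1) ≤ M * r ^ (β+1) * ρ ^ (α-1) :=
            mul_le_mul_of_nonneg_right (mul_le_mul_of_nonneg_right hMb hrb.le) hρa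
          calc (β+1)⁻¹ * r ^ (β+1) * ρ ^ (α-1) / al
              ≤ (M * r ^ (β+1) * ρ ^ (α-1)) / al := div_le_div_of_nonneg_right hle hal.le
            _ = (ρ ^ (α-1) / lam) / 4 := by
                rw [hal']; field_simp
            _ ≤ (ρ ^ (α-1) / lam) / 2 :=
                div_le_div_of_nonneg_left (by positivity) two_pos (by norm_num)
        rw [hz, abs_of_nonneg hρa]
        calc B (|f ρ| / al) ≤ B ((ρ ^ (α-1) / lam) / 2) := young_mono hB (by positivity) h1
          _ ≤ ENNReal.ofReal (1/2) * B (ρ ^ (α-1) / lam) := young_half hB (by positivity)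
      calc ∫⁻ ρ in Set.Ioi r, B (|f ρ| / al)
          ≤ ∫⁻ ρ in Set.Ioi r, ENNReal.ofReal (1/2) * B (|h₀ ρ| / lam) :=
            lintegral_mono_ae ((ae_restrict_mem measurableSet_Ioi).mono fun ρ hρ => hpt ρ hρ)
        _ = ENNReal.ofReal (1/2) * ∫⁻ ρ in Set.Ioi r, B (|h₀ ρ| / lam) :=
            lintegral_const_mul' _ _ ENNReal.ofReal_ne_top
        _ ≤ ENNReal.ofReal (1/2) * 1 := mul_le_mul_right hIoi_le _
        _ = ENNReal.ofReal (1/2) := mul_one _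
    calc (∫⁻ ρ in Set.Ioc (0:ℝ) r, B (|f ρ| / al)) + ∫⁻ ρ in Set.Ioi r, B (|f ρ| / al)
        ≤ ENNReal.ofReal (1/2) + ENNReal.ofReal (1/2) := add_le_add hI1 hI2
      _ = 1 := half1
end
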